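/- arXiv:2311.02135 — 11 statements merged into one kernel-verified Lean document; each statement's English description precedes it below -/
import Mathlib

section
/- Let k ≥ 2 be an even integer and q a prime power with q ≡ k+1 (mod 2k). Fix a multiplicative character χ_k of F_q of order k. Then, as an identity of complex numbers, k^6 · K_4(G_k(q)) = q(q−1) · Σ_{(t1,t2,t3,t4,t5) ∈ (ℤ/kℤ)^5} Σ_{a,b ∈ F_q} χ_k^{t1}(b) · χ_k^{t2}(b−1) · χ_k^{t3}(a) · χ_k^{t4}(a−1) · χ_k^{t5}(b−a). -/
/-- The number of transitive subtournaments of order `m` of the digraph with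
edge relation `edge`: the number of `m`-element vertex subsets admitting an
ordering `a_1, …, a_m` with `a_i → a_j` an edge for all `i < j`. -/
noncomputable def transK {V : Type} [DecidableEq V] (edge : V → V → Prop) (m : ℕ) : ℕ :=
  {s : Finset V | ∃ f : Fin m → V, Function.Injective f ∧ s = Finset.image f Finset.univ ∧
    ∀ i j : Fin m, i < j → edge (f i) (f j)}.ncard

open Finset

section Aux
set_option linter.unusedSectionVars false
variable {F : Type} [Field F] [Fintype F] [DecidableEq F]

lemma aux_pow_apply (χ : MulChar F ℂ) (t : ℕ) {x : F} (hx : x ≠ 0) :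
    (χ ^ t) x = (χ x) ^ t := by
  have hu : IsUnit x := isUnit_iff_ne_zero.mpr hx
  rw [← hu.unit_spec, MulChar.pow_apply_coe]

lemma aux_val_pow (χ : MulChar F ℂ) {k : ℕ} (hχk : χ ^ k = 1) (t : ℕ) {x : F}
    (c : F) (hc : c ≠ 0) (hx : x = c ^ k) : (χ ^ t) x = 1 := by
  have hx0 : x ≠ 0 := hx ▸ pow_ne_zero _ hc
  rw [aux_pow_apply χ t hx0, hx, map_pow, ← aux_pow_apply χ k hc, hχk,
    MulChar.one_apply (isUnit_iff_ne_zero.mpr hc), one_pow]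

lemma aux_ker (χ : MulChar F ℂ) {k : ℕ} (hk0 : k ≠ 0) (hχ : orderOf χ = k) {x : F}
    (hx : x ≠ 0) (h1 : χ x = 1) : ∃ c : F, c ≠ 0 ∧ x = c ^ k := by
  obtain ⟨g, hg⟩ := IsCyclic.exists_monoid_generator (α := Fˣ)
  have hord : ∀ n : ℕ, (χ ^ n = 1) ↔ (χ (g : F)) ^ n = 1 := by
    intro n
    constructor
    · intro h
      rw [← aux_pow_apply χ n g.ne_zero, h, MulChar.one_apply_coe]
    · intro h
      ext u
      obtain ⟨m, hm⟩ := hg u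
      have : (χ ^ n) (u : F) = 1 := by
        rw [aux_pow_apply χ n u.ne_zero, ← hm]
        push_cast
        rw [map_pow, ← pow_mul, mul_comm, pow_mul, h, one_pow]
      rw [this, MulChar.one_apply_coe]
  have hordg : orderOf (χ (g : F)) = k := by
    have h1' : (χ (g:F)) ^ k = 1 := (hord k).mp (hχ ▸ pow_orderOf_eq_one χ)
    have h2' : ∀ n : ℕ, (χ (g:F)) ^ n = 1 → k ∣ n := by
      intro n hn
      rw [← hχ]
      exact orderOf_dvd_of_pow_eq_one ((hord n).mpr hn)
    exact Nat.dvd_antisymm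
      (orderOf_dvd_of_pow_eq_one h1')
      (h2' _ (pow_orderOf_eq_one _))
  have hu : IsUnit x := isUnit_iff_ne_zero.mpr hx
  obtain ⟨m, hm⟩ := hg hu.unit
  have hxg : x = ((g : Fˣ) : F) ^ m := by
    have : ((g ^ m : Fˣ) : F) = x := by simp only at hm; rw [hm, hu.unit_spec]
    push_cast at this
    exact this.symm
  have hdvd : k ∣ m := by
    rw [← hordg]
    apply orderOf_dvd_of_pow_eq_one
    rw [← map_pow, ← hxg, h1]
  obtain ⟨s, hs⟩ := hdvd
  exact ⟨((g : Fˣ) : F) ^ s, pow_ne_zero _ g.ne_zero,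
    by rw [hxg, hs, mul_comm, pow_mul]⟩

lemma aux_delta (χ : MulChar F ℂ) {k : ℕ} (hk0 : k ≠ 0) (hχ : orderOf χ = k) (x : F) :
    ∑ t ∈ range k, (χ ^ t) x = if ∃ c : F, c ≠ 0 ∧ x = c ^ k then (k : ℂ) else 0 := by
  have hχk : χ ^ k = 1 := hχ ▸ pow_orderOf_eq_one χ
  split_ifs with h
  · obtain ⟨c, hc, hx⟩ := h
    rw [Finset.sum_congr rfl fun t _ => aux_val_pow χ hχk t c hc hx]
    simp
  · by_cases hx : x = 0
    · subst hx
      rw [Finset.sum_congr rfl fun t _ => ?_, Finset.sum_const_zero]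
      exact MulChar.map_nonunit _ not_isUnit_zero
    · have hne1 : χ x ≠ 1 := fun h1 => h (aux_ker χ hk0 hχ hx h1)
      rw [Finset.sum_congr rfl fun t _ => aux_pow_apply χ t hx, geom_sum_eq hne1]
      have : (χ x) ^ k = 1 := by
        rw [← aux_pow_apply χ k hx, hχk, MulChar.one_apply (isUnit_iff_ne_zero.mpr hx)]
      rw [this]
      simp

end Aux

section Aux2
set_option linter.unusedSectionVars false
variable {F : Type} [Field F] [Fintype F] [DecidableEq F]

lemma aux_neg_one {q k : ℕ} (hk : 2 ≤ k) (hkeven : Even k)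
    (hq : Fintype.card F = q) (hmod : q % (2 * k) = k + 1) :
    ¬ ∃ c : F, c ≠ 0 ∧ (-1 : F) = c ^ k := by
  rintro ⟨c, hc, h⟩
  obtain ⟨j, hj⟩ := hkeven
  have hqe : 2 * k * (q / (2 * k)) + (k + 1) = q := by
    rw [← hmod]; exact Nat.div_add_mod q (2*k)
  set m := q / (2 * k) with hm
  have hqq : q = k * (2 * m + 1) + 1 := by rw [← hqe]; ring
  have hq1 : q - 1 = k * (2 * m + 1) := by omega
  have hone : c ^ (q - 1) = 1 := by
    rw [← hq, FiniteField.pow_card_sub_one_eq_one c hc]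
  rw [hq1, pow_mul, ← h] at hone
  have hodd : Odd (2 * m + 1) := ⟨m, by ring⟩
  rw [hodd.neg_one_pow] at hone
  have hchar := (neg_one_eq_one_iff (R := F)).mp hone
  have heven := FiniteField.even_card_iff_char_two.mp hchar
  rw [hq] at heven
  have hqodd : q = 2 * (k * m + j) + 1 := by rw [← hqe, hj]; ring
  omega

lemma aux_asym {q k : ℕ} (hk : 2 ≤ k) (hkeven : Even k)
    (hq : Fintype.card F = q) (hmod : q % (2 * k) = k + 1) (x y : F)
    (h1 : ∃ c : F, c ≠ 0 ∧ y - x = c ^ k) (h2 : ∃ c : F, c ≠ 0 ∧ x - y = c ^ k) :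
    False := by
  obtain ⟨c, hc, hcx⟩ := h1
  obtain ⟨d, hd, hdx⟩ := h2
  apply aux_neg_one hk hkeven hq hmod
  refine ⟨c / d, div_ne_zero hc hd, ?_⟩
  have hxy : x - y ≠ 0 := by rw [hdx]; exact pow_ne_zero _ hd
  rw [div_pow, ← hcx, ← hdx, eq_div_iff hxy]
  ring

lemma aux_P_zero {q k : ℕ} (hk : 2 ≤ k) (hkeven : Even k)
    (hq : Fintype.card F = q) (hmod : q % (2 * k) = k + 1) :
    ¬ ∃ c : F, c ≠ 0 ∧ (0 : F) = c ^ k := by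
  intro h
  exact aux_asym hk hkeven hq hmod 0 0 (by simpa using h) (by simpa using h)
end Aux2

section Aux3
set_option linter.unusedSectionVars false
variable {F : Type} [Field F] [Fintype F] [DecidableEq F]

lemma aux_mod_unique {k t r : ℕ} (hk : 0 < k) (ht : t < k) (hr : r < k)
    (h : (t + r) % k = 0) : t = (k - r) % k := by
  rcases Nat.lt_or_ge (t + r) k with hlt | hge
  · rw [Nat.mod_eq_of_lt hlt] at h
    have hr0 : r = 0 := by omega
    subst hr0
    rw [Nat.sub_zero, Nat.mod_self]
    omega
  · rw [Nat.mod_eq_sub_mod hge, Nat.mod_eq_of_lt (by omega)] at h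
    have hr0 : 0 < r := by omega
    rw [Nat.mod_eq_of_lt (by omega)]
    omega

lemma aux_mod_exists {k T : ℕ} (hk : 0 < k) : k ∣ ((k - T % k) % k + T) := by
  have hrk : T % k < k := Nat.mod_lt _ hk
  rw [Nat.dvd_iff_mod_eq_zero, Nat.add_mod]
  rcases Nat.eq_zero_or_pos (T % k) with h | h
  · simp [h, Nat.mod_self]
  · have e : (k - T % k) % k = k - T % k := Nat.mod_eq_of_lt (by omega)
    rw [Nat.mod_mod_of_dvd _ dvd_rfl, e, show k - T % k + T % k = k by omega,
      Nat.mod_self]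

lemma aux_t0 {k : ℕ} (hk : 0 < k) (T : ℕ) (c : ℂ) :
    ∑ t ∈ Finset.range k, (if k ∣ (t + T) then c else 0) = c := by
  rw [Finset.sum_eq_single_of_mem ((k - T % k) % k)
    (Finset.mem_range.mpr (Nat.mod_lt _ hk))]
  · rw [if_pos (aux_mod_exists hk)]
  · intro b hb hne
    rw [if_neg]
    intro hdvd
    have hb' : b < k := Finset.mem_range.mp hb
    have h0 : (b + T) % k = 0 := (Nat.dvd_iff_mod_eq_zero).mp hdvd
    rw [Nat.add_mod, Nat.mod_eq_of_lt hb'] at h0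
    exact hne (aux_mod_unique hk hb' (Nat.mod_lt _ hk) h0)

lemma aux_W {k : ℕ} (hk0 : k ≠ 0) (χ : MulChar F ℂ) (hχ : orderOf χ = k) (T : ℕ) :
    ∑ w ∈ Finset.univ.erase (0 : F), (χ w) ^ T =
      if k ∣ T then ((Fintype.card F : ℂ) - 1) else 0 := by
  have hχk : χ ^ k = 1 := hχ ▸ pow_orderOf_eq_one χ
  split_ifs with h
  · obtain ⟨s, hs⟩ := h
    have : ∀ w ∈ Finset.univ.erase (0 : F), (χ w) ^ T = 1 := by
      intro w hw
      have hw0 : w ≠ 0 := (Finset.mem_erase.mp hw).1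
      rw [hs, pow_mul, ← aux_pow_apply χ k hw0, hχk,
        MulChar.one_apply (isUnit_iff_ne_zero.mpr hw0), one_pow]
    rw [Finset.sum_congr rfl this, Finset.sum_const,
      Finset.card_erase_of_mem (Finset.mem_univ _), Finset.card_univ]
    have h1 : 1 ≤ Fintype.card F := Fintype.card_pos
    rw [nsmul_eq_mul, mul_one, Nat.cast_sub h1, Nat.cast_one]
  · have hT0 : T ≠ 0 := by rintro rfl; exact h (Nat.dvd_zero k)
    have h1 : ∀ w ∈ Finset.univ.erase (0 : F), (χ w) ^ T = (χ ^ T) w := by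
      intro w hw
      exact (aux_pow_apply χ T (Finset.mem_erase.mp hw).1).symm
    rw [Finset.sum_congr rfl h1, Finset.sum_erase _ (by
      exact MulChar.map_nonunit _ not_isUnit_zero)]
    apply MulChar.sum_eq_zero_of_ne_one
    intro hT
    exact h (hχ ▸ orderOf_dvd_of_pow_eq_one hT)
end Aux3

section Aux4
set_option linter.unusedSectionVars false
variable {F : Type} [Field F] [Fintype F] [DecidableEq F]

set_option maxRecDepth 4000 in
lemma aux_mono4 : ∀ σ : Fin 4 → Fin 4, (∀ i j : Fin 4, i < j → σ i < σ j) → ∀ i, σ i = i := by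
  decide

lemma aux_transK {q k : ℕ} (hk : 2 ≤ k) (hkeven : Even k)
    (hq : Fintype.card F = q) (hmod : q % (2 * k) = k + 1) :
    (transK (fun a b : F => ∃ c : F, c ≠ 0 ∧ b - a = c ^ k) 4 : ℕ) =
      (Finset.univ.filter (fun f : Fin 4 → F =>
        ∀ i j : Fin 4, i < j → ∃ c : F, c ≠ 0 ∧ f j - f i = c ^ k)).card := by
  classical
  set good := fun f : Fin 4 → F =>
    ∀ i j : Fin 4, i < j → ∃ c : F, c ≠ 0 ∧ f j - f i = c ^ k with hgood
  have hinj : ∀ f : Fin 4 → F, good f → Function.Injective f := by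
    intro f hf i j hij
    by_contra hne
    rcases lt_or_gt_of_ne hne with h | h
    · obtain ⟨c, hc, hck⟩ := hf i j h
      rw [hij, sub_self] at hck
      have hk0 : k ≠ 0 := by omega
      exact hc ((pow_eq_zero_iff hk0).mp hck.symm)
    · obtain ⟨c, hc, hck⟩ := hf j i h
      rw [hij, sub_self] at hck
      have hk0 : k ≠ 0 := by omega
      exact hc ((pow_eq_zero_iff hk0).mp hck.symm)
  have hset : {s : Finset F | ∃ f : Fin 4 → F, Function.Injective f ∧
      s = Finset.image f Finset.univ ∧
      ∀ i j : Fin 4, i < j → ∃ c : F, c ≠ 0 ∧ f j - f i = c ^ k} =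
      ↑((Finset.univ.filter good).image (fun f => Finset.image f Finset.univ)) := by
    ext s
    simp only [Set.mem_setOf_eq, Finset.coe_image, Set.mem_image, Finset.mem_coe,
      Finset.mem_filter, Finset.mem_univ, true_and]
    constructor
    · rintro ⟨f, _, hs, hf⟩
      exact ⟨f, hf, hs.symm⟩
    · rintro ⟨f, hf, hs⟩
      exact ⟨f, hinj f hf, hs.symm, hf⟩
  have hcard : ((Finset.univ.filter good).image
      (fun f => Finset.image f Finset.univ)).card = (Finset.univ.filter good).card := by
    apply Finset.card_image_of_injOn
    intro f hf g hg him
    simp only [Finset.mem_coe, Finset.mem_filter, Finset.mem_univ, true_and] at hf hg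
    have hσ : ∀ i : Fin 4, ∃ j : Fin 4, f j = g i := by
      intro i
      have him' : Finset.image f Finset.univ = Finset.image g Finset.univ := him
      have : g i ∈ Finset.image f Finset.univ := by
        rw [him']; exact Finset.mem_image_of_mem g (Finset.mem_univ i)
      obtain ⟨j, _, hj⟩ := Finset.mem_image.mp this
      exact ⟨j, hj⟩
    choose σ hσ' using hσ
    have hmono : ∀ i j : Fin 4, i < j → σ i < σ j := by
      intro i j hij
      rcases lt_trichotomy (σ i) (σ j) with h | h | h
      · exact h
      · exfalso
        have : g i = g j := by rw [← hσ' i, ← hσ' j, h]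
        exact absurd (hinj g hg (this)) (ne_of_lt hij)
      · exfalso
        have h1 : ∃ c : F, c ≠ 0 ∧ g j - g i = c ^ k := hg i j hij
        have h2 : ∃ c : F, c ≠ 0 ∧ g i - g j = c ^ k := by
          have := hf (σ j) (σ i) h
          rwa [hσ' i, hσ' j] at this
        exact aux_asym hk hkeven hq hmod (g i) (g j) h1 h2
    funext i
    rw [← hσ' i, aux_mono4 σ hmono i]
  calc (transK (fun a b : F => ∃ c : F, c ≠ 0 ∧ b - a = c ^ k) 4 : ℕ)
      = {s : Finset F | ∃ f : Fin 4 → F, Function.Injective f ∧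
          s = Finset.image f Finset.univ ∧
          ∀ i j : Fin 4, i < j → ∃ c : F, c ≠ 0 ∧ f j - f i = c ^ k}.ncard := rfl
    _ = _ := by rw [hset, Set.ncard_coe_finset, hcard]

lemma aux_card_quad {q k : ℕ} (hk : 2 ≤ k) (hkeven : Even k)
    (hq : Fintype.card F = q) (hmod : q % (2 * k) = k + 1) :
    (Finset.univ.filter (fun f : Fin 4 → F =>
        ∀ i j : Fin 4, i < j → ∃ c : F, c ≠ 0 ∧ f j - f i = c ^ k)).card =
    (Finset.univ.filter (fun p : F × F × F × F =>
        (∃ c : F, c ≠ 0 ∧ p.2.1 - p.1 = c ^ k) ∧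
        (∃ c : F, c ≠ 0 ∧ p.2.2.1 - p.1 = c ^ k) ∧
        (∃ c : F, c ≠ 0 ∧ p.2.2.2 - p.1 = c ^ k) ∧
        (∃ c : F, c ≠ 0 ∧ p.2.2.1 - p.2.1 = c ^ k) ∧
        (∃ c : F, c ≠ 0 ∧ p.2.2.2 - p.2.1 = c ^ k) ∧
        (∃ c : F, c ≠ 0 ∧ p.2.2.2 - p.2.2.1 = c ^ k))).card := by
  classical
  apply Finset.card_bij (fun f _ => (f 0, f 1, f 2, f 3))
  · intro f hf
    simp only [Finset.mem_filter, Finset.mem_univ, true_and] at hf ⊢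
    exact ⟨hf 0 1 (by decide), hf 0 2 (by decide), hf 0 3 (by decide),
      hf 1 2 (by decide), hf 1 3 (by decide), hf 2 3 (by decide)⟩
  · intro f hf g hg h
    simp only [Prod.mk.injEq] at h
    funext i
    fin_cases i
    · exact h.1
    · exact h.2.1
    · exact h.2.2.1
    · exact h.2.2.2
  · intro p hp
    simp only [Finset.mem_filter, Finset.mem_univ, true_and] at hp
    refine ⟨![p.1, p.2.1, p.2.2.1, p.2.2.2], ?_, ?_⟩
    · simp only [Finset.mem_filter, Finset.mem_univ, true_and]
      intro i j hij
      fin_cases i <;> fin_cases j <;>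
        simp_all [Matrix.cons_val_zero, Matrix.cons_val_one, Matrix.head_cons] <;>
        omega
    · simp [Matrix.cons_val_zero, Matrix.cons_val_one, Matrix.head_cons]

end Aux4

noncomputable def auxdd {F : Type} [Field F] [Fintype F] [DecidableEq F]
    (χ : MulChar F ℂ) (k : ℕ) (x : F) : ℂ := ∑ t ∈ Finset.range k, (χ ^ t) x

section Aux5
set_option linter.unusedSectionVars false
variable {F : Type} [Field F] [Fintype F] [DecidableEq F]

lemma auxdd_val {k : ℕ} (hk0 : k ≠ 0) (χ : MulChar F ℂ) (hχ : orderOf χ = k) (x : F) :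
    auxdd χ k x = if ∃ c : F, c ≠ 0 ∧ x = c ^ k then (k : ℂ) else 0 :=
  aux_delta χ hk0 hχ x

lemma aux_count {q k : ℕ} (hk : 2 ≤ k) (hkeven : Even k)
    (hq : Fintype.card F = q) (hmod : q % (2 * k) = k + 1)
    (χ : MulChar F ℂ) (hχ : orderOf χ = k) :
    ((k : ℂ) ^ 6) * ((Finset.univ.filter (fun p : F × F × F × F =>
        (∃ c : F, c ≠ 0 ∧ p.2.1 - p.1 = c ^ k) ∧
        (∃ c : F, c ≠ 0 ∧ p.2.2.1 - p.1 = c ^ k) ∧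
        (∃ c : F, c ≠ 0 ∧ p.2.2.2 - p.1 = c ^ k) ∧
        (∃ c : F, c ≠ 0 ∧ p.2.2.1 - p.2.1 = c ^ k) ∧
        (∃ c : F, c ≠ 0 ∧ p.2.2.2 - p.2.1 = c ^ k) ∧
        (∃ c : F, c ≠ 0 ∧ p.2.2.2 - p.2.2.1 = c ^ k))).card : ℂ) =
    ∑ a1 : F, ∑ a2 : F, ∑ a3 : F, ∑ a4 : F,
      auxdd χ k (a2 - a1) * auxdd χ k (a3 - a1) * auxdd χ k (a4 - a1) *
        auxdd χ k (a3 - a2) * auxdd χ k (a4 - a2) * auxdd χ k (a4 - a3) := by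
  classical
  have hk0 : k ≠ 0 := by omega
  have key : ∀ a1 a2 a3 a4 : F,
      auxdd χ k (a2 - a1) * auxdd χ k (a3 - a1) * auxdd χ k (a4 - a1) *
        auxdd χ k (a3 - a2) * auxdd χ k (a4 - a2) * auxdd χ k (a4 - a3) =
      if (∃ c : F, c ≠ 0 ∧ a2 - a1 = c ^ k) ∧
        (∃ c : F, c ≠ 0 ∧ a3 - a1 = c ^ k) ∧
        (∃ c : F, c ≠ 0 ∧ a4 - a1 = c ^ k) ∧
        (∃ c : F, c ≠ 0 ∧ a3 - a2 = c ^ k) ∧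
        (∃ c : F, c ≠ 0 ∧ a4 - a2 = c ^ k) ∧
        (∃ c : F, c ≠ 0 ∧ a4 - a3 = c ^ k) then (k : ℂ) ^ 6 else 0 := by
    intro a1 a2 a3 a4
    rw [auxdd_val hk0 χ hχ, auxdd_val hk0 χ hχ, auxdd_val hk0 χ hχ,
      auxdd_val hk0 χ hχ, auxdd_val hk0 χ hχ, auxdd_val hk0 χ hχ]
    by_cases h1 : ∃ c : F, c ≠ 0 ∧ a2 - a1 = c ^ k <;>
    by_cases h2 : ∃ c : F, c ≠ 0 ∧ a3 - a1 = c ^ k <;>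
    by_cases h3 : ∃ c : F, c ≠ 0 ∧ a4 - a1 = c ^ k <;>
    by_cases h4 : ∃ c : F, c ≠ 0 ∧ a3 - a2 = c ^ k <;>
    by_cases h5 : ∃ c : F, c ≠ 0 ∧ a4 - a2 = c ^ k <;>
    by_cases h6 : ∃ c : F, c ≠ 0 ∧ a4 - a3 = c ^ k <;>
      simp only [h1, h2, h3, h4, h5, h6, if_true, if_false, and_true, true_and,
        and_false, false_and, zero_mul, mul_zero, if_pos, ite_true, ite_false] <;>
      first
        | ring
        | rfl
  calc ((k : ℂ) ^ 6) * _ = ∑ p : F × F × F × F,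
        (if (∃ c : F, c ≠ 0 ∧ p.2.1 - p.1 = c ^ k) ∧
          (∃ c : F, c ≠ 0 ∧ p.2.2.1 - p.1 = c ^ k) ∧
          (∃ c : F, c ≠ 0 ∧ p.2.2.2 - p.1 = c ^ k) ∧
          (∃ c : F, c ≠ 0 ∧ p.2.2.1 - p.2.1 = c ^ k) ∧
          (∃ c : F, c ≠ 0 ∧ p.2.2.2 - p.2.1 = c ^ k) ∧
          (∃ c : F, c ≠ 0 ∧ p.2.2.2 - p.2.2.1 = c ^ k) then (k : ℂ) ^ 6 else 0) := by
        rw [← Finset.sum_filter, Finset.sum_const, nsmul_eq_mul]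
        ring
    _ = ∑ a1 : F, ∑ a2 : F, ∑ a3 : F, ∑ a4 : F,
        (if (∃ c : F, c ≠ 0 ∧ a2 - a1 = c ^ k) ∧
          (∃ c : F, c ≠ 0 ∧ a3 - a1 = c ^ k) ∧
          (∃ c : F, c ≠ 0 ∧ a4 - a1 = c ^ k) ∧
          (∃ c : F, c ≠ 0 ∧ a3 - a2 = c ^ k) ∧
          (∃ c : F, c ≠ 0 ∧ a4 - a2 = c ^ k) ∧
          (∃ c : F, c ≠ 0 ∧ a4 - a3 = c ^ k) then (k : ℂ) ^ 6 else 0) := by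
        simp only [Fintype.sum_prod_type]
    _ = _ := by
        refine Finset.sum_congr rfl fun a1 _ => Finset.sum_congr rfl fun a2 _ =>
          Finset.sum_congr rfl fun a3 _ => Finset.sum_congr rfl fun a4 _ => ?_
        exact (key a1 a2 a3 a4).symm

end Aux5

noncomputable def auxE {F : Type} [Field F] [Fintype F] [DecidableEq F]
    (χ : MulChar F ℂ) (k : ℕ) (w a b : F) : ℂ :=
  auxdd χ k w * auxdd χ k (w * a) * auxdd χ k (w * b) * auxdd χ k (w * (a - 1)) *
    auxdd χ k (w * (b - 1)) * auxdd χ k (w * (b - a))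

section Aux6
set_option linter.unusedSectionVars false
variable {F : Type} [Field F] [Fintype F] [DecidableEq F]

lemma aux_sub {q k : ℕ} (hk : 2 ≤ k) (hkeven : Even k)
    (hq : Fintype.card F = q) (hmod : q % (2 * k) = k + 1)
    (χ : MulChar F ℂ) (hχ : orderOf χ = k) :
    (∑ a1 : F, ∑ a2 : F, ∑ a3 : F, ∑ a4 : F,
      auxdd χ k (a2 - a1) * auxdd χ k (a3 - a1) * auxdd χ k (a4 - a1) *
        auxdd χ k (a3 - a2) * auxdd χ k (a4 - a2) * auxdd χ k (a4 - a3)) =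
    (q : ℂ) * ∑ w ∈ Finset.univ.erase (0 : F), ∑ a : F, ∑ b : F, auxE χ k w a b := by
  classical
  have hk0 : k ≠ 0 := by omega
  have hdd0 : auxdd χ k 0 = 0 := by
    rw [auxdd_val hk0 χ hχ, if_neg (aux_P_zero hk hkeven hq hmod)]
  have hsub : ∀ a1 : F, (∑ a2 : F, ∑ a3 : F, ∑ a4 : F,
      auxdd χ k (a2 - a1) * auxdd χ k (a3 - a1) * auxdd χ k (a4 - a1) *
        auxdd χ k (a3 - a2) * auxdd χ k (a4 - a2) * auxdd χ k (a4 - a3)) =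
      ∑ w ∈ Finset.univ.erase (0 : F), ∑ a : F, ∑ b : F, auxE χ k w a b := by
    intro a1
    calc (∑ a2 : F, ∑ a3 : F, ∑ a4 : F,
        auxdd χ k (a2 - a1) * auxdd χ k (a3 - a1) * auxdd χ k (a4 - a1) *
          auxdd χ k (a3 - a2) * auxdd χ k (a4 - a2) * auxdd χ k (a4 - a3))
        = ∑ w : F, ∑ a3 : F, ∑ a4 : F,
        auxdd χ k (a1 + w - a1) * auxdd χ k (a3 - a1) * auxdd χ k (a4 - a1) *
          auxdd χ k (a3 - (a1 + w)) * auxdd χ k (a4 - (a1 + w)) * auxdd χ k (a4 - a3) :=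
        (Fintype.sum_equiv (Equiv.addLeft a1) _ _ (fun w => rfl)).symm
      _ = ∑ w ∈ Finset.univ.erase (0 : F), ∑ a3 : F, ∑ a4 : F,
        auxdd χ k (a1 + w - a1) * auxdd χ k (a3 - a1) * auxdd χ k (a4 - a1) *
          auxdd χ k (a3 - (a1 + w)) * auxdd χ k (a4 - (a1 + w)) * auxdd χ k (a4 - a3) := by
        refine (Finset.sum_erase _ ?_).symm
        rw [show a1 + (0 : F) - a1 = 0 by ring]
        simp [hdd0]
      _ = ∑ w ∈ Finset.univ.erase (0 : F), ∑ a : F, ∑ b : F, auxE χ k w a b := by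
        refine Finset.sum_congr rfl fun w hw => ?_
        have hw0 : w ≠ 0 := (Finset.mem_erase.mp hw).1
        calc (∑ a3 : F, ∑ a4 : F,
            auxdd χ k (a1 + w - a1) * auxdd χ k (a3 - a1) * auxdd χ k (a4 - a1) *
              auxdd χ k (a3 - (a1 + w)) * auxdd χ k (a4 - (a1 + w)) * auxdd χ k (a4 - a3))
            = ∑ a : F, ∑ a4 : F,
            auxdd χ k (a1 + w - a1) * auxdd χ k (a1 + w * a - a1) * auxdd χ k (a4 - a1) *
              auxdd χ k (a1 + w * a - (a1 + w)) * auxdd χ k (a4 - (a1 + w)) *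
                auxdd χ k (a4 - (a1 + w * a)) :=
            (Fintype.sum_equiv ((Equiv.mulLeft₀ w hw0).trans (Equiv.addLeft a1)) _ _
              (fun a => rfl)).symm
          _ = ∑ a : F, ∑ b : F,
            auxdd χ k (a1 + w - a1) * auxdd χ k (a1 + w * a - a1) *
              auxdd χ k (a1 + w * b - a1) * auxdd χ k (a1 + w * a - (a1 + w)) *
              auxdd χ k (a1 + w * b - (a1 + w)) * auxdd χ k (a1 + w * b - (a1 + w * a)) := by
            refine Finset.sum_congr rfl fun a _ => ?_
            exact (Fintype.sum_equiv ((Equiv.mulLeft₀ w hw0).trans (Equiv.addLeft a1)) _ _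
              (fun b => rfl)).symm
          _ = ∑ a : F, ∑ b : F, auxE χ k w a b := by
            refine Finset.sum_congr rfl fun a _ => Finset.sum_congr rfl fun b _ => ?_
            rw [auxE, show a1 + w - a1 = w by ring, show a1 + w * a - a1 = w * a by ring,
              show a1 + w * b - a1 = w * b by ring,
              show a1 + w * a - (a1 + w) = w * (a - 1) by ring,
              show a1 + w * b - (a1 + w) = w * (b - 1) by ring,
              show a1 + w * b - (a1 + w * a) = w * (b - a) by ring]
  rw [Finset.sum_congr rfl fun a1 _ => hsub a1, Finset.sum_const, Finset.card_univ, hq,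
    nsmul_eq_mul]
end Aux6

section Aux7
set_option linter.unusedSectionVars false
variable {F : Type} [Field F] [Fintype F] [DecidableEq F]

lemma aux_rot {α β γ : Type*} (sa : Finset α) (sb : Finset β) (sc : Finset γ)
    (g : α → β → γ → ℂ) :
    (∑ a ∈ sa, ∑ b ∈ sb, ∑ c ∈ sc, g a b c) = ∑ c ∈ sc, ∑ a ∈ sa, ∑ b ∈ sb, g a b c :=
  calc (∑ a ∈ sa, ∑ b ∈ sb, ∑ c ∈ sc, g a b c)
      = ∑ a ∈ sa, ∑ c ∈ sc, ∑ b ∈ sb, g a b c :=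
        Finset.sum_congr rfl fun _ _ => Finset.sum_comm
    _ = _ := Finset.sum_comm

lemma aux_swap6 {α : Type*} (s : Finset α) (r : Finset ℕ)
    (f : α → ℕ → ℕ → ℕ → ℕ → ℕ → ℕ → ℂ) :
    (∑ w ∈ s, ∑ t1 ∈ r, ∑ t2 ∈ r, ∑ t3 ∈ r, ∑ t4 ∈ r, ∑ t5 ∈ r, ∑ t0 ∈ r,
        f w t1 t2 t3 t4 t5 t0) =
    ∑ t1 ∈ r, ∑ t2 ∈ r, ∑ t3 ∈ r, ∑ t4 ∈ r, ∑ t5 ∈ r, ∑ t0 ∈ r, ∑ w ∈ s,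
        f w t1 t2 t3 t4 t5 t0 := by
  rw [Finset.sum_comm]
  refine Finset.sum_congr rfl fun t1 _ => ?_
  rw [Finset.sum_comm]
  refine Finset.sum_congr rfl fun t2 _ => ?_
  rw [Finset.sum_comm]
  refine Finset.sum_congr rfl fun t3 _ => ?_
  rw [Finset.sum_comm]
  refine Finset.sum_congr rfl fun t4 _ => ?_
  rw [Finset.sum_comm]
  refine Finset.sum_congr rfl fun t5 _ => ?_
  rw [Finset.sum_comm]

lemma aux_wsum {q k : ℕ} (hk : 2 ≤ k) (hkeven : Even k)
    (hq : Fintype.card F = q) (hmod : q % (2 * k) = k + 1)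
    (χ : MulChar F ℂ) (hχ : orderOf χ = k) (a b : F) :
    (∑ w ∈ Finset.univ.erase (0 : F), auxE χ k w a b) =
    ∑ t1 ∈ Finset.range k, ∑ t2 ∈ Finset.range k, ∑ t3 ∈ Finset.range k,
      ∑ t4 ∈ Finset.range k, ∑ t5 ∈ Finset.range k,
        ((χ ^ t1) b * (χ ^ t2) (b - 1) * (χ ^ t3) a * (χ ^ t4) (a - 1) *
          (χ ^ t5) (b - a)) * ((q : ℂ) - 1) := by
  classical
  have hk0 : k ≠ 0 := by omega
  have hkpos : 0 < k := by omega
  have hE : ∀ w ∈ Finset.univ.erase (0 : F), auxE χ k w a b =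
      ∑ t1 ∈ Finset.range k, ∑ t2 ∈ Finset.range k, ∑ t3 ∈ Finset.range k,
        ∑ t4 ∈ Finset.range k, ∑ t5 ∈ Finset.range k, ∑ t0 ∈ Finset.range k,
          ((χ ^ t1) b * (χ ^ t2) (b - 1) * (χ ^ t3) a * (χ ^ t4) (a - 1) *
            (χ ^ t5) (b - a)) * (χ w) ^ (t0 + (t1 + t2 + t3 + t4 + t5)) := by
    intro w hw
    have hw0 : w ≠ 0 := (Finset.mem_erase.mp hw).1
    have hsp : ∀ (t : ℕ) (x : F), (χ ^ t) (w * x) = (χ w) ^ t * (χ ^ t) x := fun t x => by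
      rw [map_mul, aux_pow_apply χ t hw0]
    have hwt : ∀ t : ℕ, (χ ^ t) w = (χ w) ^ t := fun t => aux_pow_apply χ t hw0
    calc auxE χ k w a b
        = auxdd χ k w * (auxdd χ k (w * (b - a)) * (auxdd χ k (w * (a - 1)) *
            (auxdd χ k (w * a) * (auxdd χ k (w * (b - 1)) * auxdd χ k (w * b))))) := by
          rw [auxE]; ring
      _ = _ := by
          simp only [auxdd, Finset.sum_mul, Finset.mul_sum]
          refine Finset.sum_congr rfl fun t1 _ => Finset.sum_congr rfl fun t2 _ =>
            Finset.sum_congr rfl fun t3 _ => Finset.sum_congr rfl fun t4 _ =>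
            Finset.sum_congr rfl fun t5 _ => Finset.sum_congr rfl fun t0 _ => ?_
          rw [hsp t1 b, hsp t2 (b - 1), hsp t3 a, hsp t4 (a - 1), hsp t5 (b - a), hwt t0]
          ring
  rw [Finset.sum_congr rfl hE, aux_swap6]
  refine Finset.sum_congr rfl fun t1 _ => Finset.sum_congr rfl fun t2 _ =>
    Finset.sum_congr rfl fun t3 _ => Finset.sum_congr rfl fun t4 _ =>
    Finset.sum_congr rfl fun t5 _ => ?_
  calc (∑ t0 ∈ Finset.range k, ∑ w ∈ Finset.univ.erase (0 : F),
        ((χ ^ t1) b * (χ ^ t2) (b - 1) * (χ ^ t3) a * (χ ^ t4) (a - 1) *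
          (χ ^ t5) (b - a)) * (χ w) ^ (t0 + (t1 + t2 + t3 + t4 + t5)))
      = ∑ t0 ∈ Finset.range k,
        ((χ ^ t1) b * (χ ^ t2) (b - 1) * (χ ^ t3) a * (χ ^ t4) (a - 1) *
          (χ ^ t5) (b - a)) *
          (if k ∣ (t0 + (t1 + t2 + t3 + t4 + t5)) then (q : ℂ) - 1 else 0) := by
        refine Finset.sum_congr rfl fun t0 _ => ?_
        rw [← Finset.mul_sum, aux_W hk0 χ hχ, hq]
    _ = _ := by
        rw [← Finset.mul_sum, aux_t0 hkpos (t1 + t2 + t3 + t4 + t5) ((q : ℂ) - 1)]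
end Aux7

theorem stmt_0 {F : Type} [Field F] [Fintype F] [DecidableEq F] (q k : ℕ)
    (hk : 2 ≤ k) (hkeven : Even k) (hq : Fintype.card F = q)
    (hmod : q % (2 * k) = k + 1)
    (χ : MulChar F ℂ) (hχ : orderOf χ = k) :
    (k : ℂ) ^ 6 * (transK (fun a b : F => ∃ c : F, c ≠ 0 ∧ b - a = c ^ k) 4 : ℕ) =
      (q : ℂ) * ((q : ℂ) - 1) *
        ∑ t1 ∈ Finset.range k, ∑ t2 ∈ Finset.range k, ∑ t3 ∈ Finset.range k,
          ∑ t4 ∈ Finset.range k, ∑ t5 ∈ Finset.range k, ∑ a : F, ∑ b : F,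
            (χ ^ t1) b * (χ ^ t2) (b - 1) * (χ ^ t3) a * (χ ^ t4) (a - 1) *
              (χ ^ t5) (b - a) := by
  classical
  rw [aux_transK hk hkeven hq hmod, aux_card_quad hk hkeven hq hmod,
    aux_count hk hkeven hq hmod χ hχ, aux_sub hk hkeven hq hmod χ hχ]
  rw [show (∑ w ∈ Finset.univ.erase (0 : F), ∑ a : F, ∑ b : F, auxE χ k w a b)
      = ∑ a : F, ∑ b : F, ∑ w ∈ Finset.univ.erase (0 : F), auxE χ k w a b from
    (aux_rot Finset.univ Finset.univ (Finset.univ.erase (0 : F))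
      (fun a b w => auxE χ k w a b)).symm]
  rw [Finset.sum_congr rfl fun a (_ : a ∈ Finset.univ) => Finset.sum_congr rfl
    fun b (_ : b ∈ Finset.univ) => aux_wsum hk hkeven hq hmod χ hχ a b]
  simp only [← Finset.sum_mul]
  have h3 : (∑ a : F, ∑ b : F, ∑ t1 ∈ Finset.range k, ∑ t2 ∈ Finset.range k,
      ∑ t3 ∈ Finset.range k, ∑ t4 ∈ Finset.range k, ∑ t5 ∈ Finset.range k,
        (χ ^ t1) b * (χ ^ t2) (b - 1) * (χ ^ t3) a * (χ ^ t4) (a - 1) *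
          (χ ^ t5) (b - a)) =
      ∑ t1 ∈ Finset.range k, ∑ t2 ∈ Finset.range k, ∑ t3 ∈ Finset.range k,
      ∑ t4 ∈ Finset.range k, ∑ t5 ∈ Finset.range k, ∑ a : F, ∑ b : F,
        (χ ^ t1) b * (χ ^ t2) (b - 1) * (χ ^ t3) a * (χ ^ t4) (a - 1) *
          (χ ^ t5) (b - a) := by
    rw [aux_rot Finset.univ Finset.univ (Finset.range k)]
    refine Finset.sum_congr rfl fun t1 _ => ?_
    rw [aux_rot Finset.univ Finset.univ (Finset.range k)]
    refine Finset.sum_congr rfl fun t2 _ => ?_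
    rw [aux_rot Finset.univ Finset.univ (Finset.range k)]
    refine Finset.sum_congr rfl fun t3 _ => ?_
    rw [aux_rot Finset.univ Finset.univ (Finset.range k)]
    refine Finset.sum_congr rfl fun t4 _ => ?_
    rw [aux_rot Finset.univ Finset.univ (Finset.range k)]
  rw [h3]
  ring
end

section
/- Let k ≥ 2 be an even integer, q a prime power with q ≡ k+1 (mod 2k), and χ_k a multiplicative character of F_q of order k. Then, as an identity of complex numbers, k^3 · K_3(G_k(q)) = q(q−1) · ( R_k(q) + q − 2k + 1 ). -/
open Finset

/-- Jacobi sum `J(A,B) = ∑_{a ∈ F} A(a) B(1-a)`. -/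
noncomputable def jac {F : Type} [Field F] [Fintype F] (A B : MulChar F ℂ) : ℂ :=
  ∑ a : F, A a * B (1 - a)

/-- `R_k(q) = ∑_{1 ≤ s,t ≤ k-1, s+t ≢ 0 (k)} J(χ^s, χ^t)`. -/
noncomputable def Rk {F : Type} [Field F] [Fintype F] (k : ℕ) (χ : MulChar F ℂ) : ℂ :=
  ∑ s ∈ Finset.Icc 1 (k - 1), ∑ t ∈ Finset.Icc 1 (k - 1),
    if (s : ZMod k) + t ≠ 0 then jac (χ ^ s) (χ ^ t) else 0

lemma jac_eq_jacobiSum {F : Type} [Field F] [Fintype F] (A B : MulChar F ℂ) :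
    jac A B = jacobiSum A B := rfl

section Aux

variable {F : Type} [Field F] [Fintype F] [DecidableEq F]

lemma image_fin3 {V : Type} [DecidableEq V] (f : Fin 3 → V) :
    Finset.image f Finset.univ = {f 0, f 1, f 2} := by
  have h : (Finset.univ : Finset (Fin 3)) = {0, 1, 2} := by decide
  rw [h]
  simp

/-- the triple-counting lemma -/
lemma transK_three_eq {V : Type} [DecidableEq V] [Fintype V] (e : V → V → Prop)
    (hne : ∀ x y, e x y → x ≠ y) (hanti : ∀ x y, e x y → ¬ e y x) :
    transK e 3 =
      {p : V × V × V | e p.1 p.2.1 ∧ e p.2.1 p.2.2 ∧ e p.1 p.2.2}.ncard := by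
  classical
  set S : Set (V × V × V) := {p : V × V × V | e p.1 p.2.1 ∧ e p.2.1 p.2.2 ∧ e p.1 p.2.2}
  have himg : {s : Finset V | ∃ f : Fin 3 → V, Function.Injective f ∧ s = Finset.image f Finset.univ ∧
      ∀ i j : Fin 3, i < j → e (f i) (f j)} =
      (fun p : V × V × V => ({p.1, p.2.1, p.2.2} : Finset V)) '' S := by
    ext s
    constructor
    · rintro ⟨f, hf, rfl, hmono⟩
      refine ⟨(f 0, f 1, f 2), ⟨hmono 0 1 (by decide), hmono 1 2 (by decide), hmono 0 2 (by decide)⟩, ?_⟩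
      exact (image_fin3 f).symm
    · rintro ⟨⟨a, b, c⟩, ⟨h1, h2, h3⟩, rfl⟩
      refine ⟨![a, b, c], ?_, ?_, ?_⟩
      · intro i j hij
        fin_cases i <;> fin_cases j <;> simp_all <;>
          exact absurd rfl (hne _ _ (by assumption))
      · show ({a, b, c} : Finset V) = _
        rw [image_fin3]
        simp
      · intro i j hij
        fin_cases i <;> fin_cases j <;> simp_all
  have hinj : Set.InjOn (fun p : V × V × V => ({p.1, p.2.1, p.2.2} : Finset V)) S := by
    rintro ⟨a, b, c⟩ hm ⟨a', b', c'⟩ hm' h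
    obtain ⟨h1, h2, h3⟩ : e a b ∧ e b c ∧ e a c := hm
    obtain ⟨h1', h2', h3'⟩ : e a' b' ∧ e b' c' ∧ e a' c' := hm'
    have h' : ({a, b, c} : Finset V) = {a', b', c'} := h
    simp only [Finset.ext_iff, Finset.mem_insert, Finset.mem_singleton] at h'
    have ha' : a' = a ∨ a' = b ∨ a' = c := (h' a').mpr (Or.inl rfl)
    have hb' : b' = a ∨ b' = b ∨ b' = c := (h' b').mpr (Or.inr (Or.inl rfl))
    have hc' : c' = a ∨ c' = b ∨ c' = c := (h' c').mpr (Or.inr (Or.inr rfl))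
    have ha : a = a' ∨ a = b' ∨ a = c' := (h' a).mp (Or.inl rfl)
    have haa : a = a' := by
      rcases ha' with h0 | h0 | h0
      · exact h0.symm
      · rcases ha with h4 | h4 | h4
        · exact absurd (h4.trans h0) (hne _ _ h1)
        · exfalso
          rw [h0, ← h4] at h1'
          exact hanti _ _ h1 h1'
        · exfalso
          rw [h0, ← h4] at h3'
          exact hanti _ _ h1 h3'
      · rcases ha with h4 | h4 | h4
        · exact absurd (h4.trans h0) (hne _ _ h3)
        · exfalso
          rw [h0, ← h4] at h1'
          exact hanti _ _ h3 h1'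
        · exfalso
          rw [h0, ← h4] at h3'
          exact hanti _ _ h3 h3'
    have hbb : b = b' := by
      rcases hb' with h0 | h0 | h0
      · exact absurd (h0.trans haa) (Ne.symm (hne _ _ h1'))
      · exact h0.symm
      · -- b' = c; find c'
        rcases hc' with h4 | h4 | h4
        · exact absurd (h4.trans haa) (Ne.symm (hne _ _ h3'))
        · exfalso
          rw [h0, h4] at h2'
          exact hanti _ _ h2 h2'
        · exfalso
          rw [h0, h4] at h2'
          exact hne _ _ h2' rfl
    have hcc : c = c' := by
      rcases hc' with h0 | h0 | h0
      · exact absurd (h0.trans haa) (Ne.symm (hne _ _ h3'))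
      · exact absurd (h0.trans hbb) (Ne.symm (hne _ _ h2'))
      · exact h0.symm
    rw [Prod.ext_iff, Prod.ext_iff]
    exact ⟨haa, hbb, hcc⟩
  rw [transK, himg, Set.ncard_image_of_injOn hinj]

end Aux

section NT

variable {F : Type} [Field F] [Fintype F] [DecidableEq F]

lemma no_kth_root_neg_one (q k m : ℕ) (hk : 2 ≤ k) (hkeven : Even k)
    (hq : Fintype.card F = q) (hqm : q = 2 * k * m + (k + 1)) :
    ¬ ∃ c : F, c ≠ 0 ∧ (-1 : F) = c ^ k := by
  rintro ⟨c, hc, hck⟩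
  obtain ⟨j, hj⟩ := hkeven
  obtain ⟨t, ht⟩ : ∃ t, q = 2 * t + 1 := ⟨k * m + j, by rw [hqm, hj]; ring⟩
  have hqodd : q % 2 = 1 := by omega
  have h2 : (2 : F) ≠ 0 := by
    intro h20
    have hd2 : ringChar F ∣ 2 := (ringChar.spec F 2).mp (by exact_mod_cast h20)
    have hdq : ringChar F ∣ q := (ringChar.spec F q).mp
      (by rw [← hq]; exact FiniteField.cast_card_eq_zero F)
    rcases (Nat.dvd_prime Nat.prime_two).mp hd2 with h | h
    · have h1 : ((1 : ℕ) : F) = 0 := (ringChar.spec F 1).mpr (h ▸ dvd_refl _)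
      simp at h1
    · rw [h] at hdq
      omega
  have hne1 : (-1 : F) ≠ 1 := by
    intro h
    apply h2
    linear_combination -h
  set u : Fˣ := Units.mk0 c hc with hu
  have hcoe : ((u ^ k : Fˣ) : F) = c ^ k := by
    rw [Units.val_pow_eq_pow_val]; rfl
  have hu2k : u ^ (2 * k) = 1 := by
    apply Units.ext
    rw [Units.val_pow_eq_pow_val, Units.val_one]
    show c ^ (2 * k) = 1
    rw [mul_comm, pow_mul, ← hck]
    norm_num
  have hordu : orderOf u ∣ k := by
    have hd1 : orderOf u ∣ 2 * k := orderOf_dvd_iff_pow_eq_one.mpr hu2k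
    have hd2 : orderOf u ∣ q - 1 := by
      have h := orderOf_dvd_card (x := u)
      rwa [Fintype.card_units, hq] at h
    have hq1 : q - 1 = k * (2 * m + 1) := by
      have hr : k * (2 * m + 1) = 2 * k * m + k := by ring
      omega
    have hgcd : Nat.gcd (2 * k) (k * (2 * m + 1)) = k := by
      rw [mul_comm 2 k, Nat.gcd_mul_left]
      have hg : Nat.gcd 2 (2 * m + 1) = 1 := by
        rw [Nat.gcd_rec]
        have : (2 * m + 1) % 2 = 1 := by omega
        rw [this]
        simp
      rw [hg, mul_one]
    have hg := Nat.dvd_gcd hd1 (hq1 ▸ hd2)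
    rwa [hgcd] at hg
  have hck1 : c ^ k = 1 := by
    have h1 : u ^ k = 1 := orderOf_dvd_iff_pow_eq_one.mp hordu
    rw [← hcoe, h1, Units.val_one]
  exact hne1 (hck.trans hck1)

lemma kernel_iff (k : ℕ) (hk0 : k ≠ 0)
    (χ : MulChar F ℂ) (hχ : orderOf χ = k) (x : F) (hx : x ≠ 0) :
    χ x = 1 ↔ ∃ c : F, c ≠ 0 ∧ x = c ^ k := by
  have hχk : χ ^ k = 1 := hχ ▸ pow_orderOf_eq_one χ
  constructor
  · intro h1
    obtain ⟨g, hg⟩ := IsCyclic.exists_generator (α := Fˣ)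
    have hgen : ∀ u : Fˣ, ∃ n : ℕ, g ^ n = u := by
      intro u
      obtain ⟨n, hn⟩ := (mem_powers_iff_mem_zpowers).mpr (hg u)
      exact ⟨n, hn⟩
    have hζk : (χ (g : F)) ^ k = 1 := by
      rw [← MulChar.pow_apply' χ hk0, hχk, MulChar.one_apply_coe]
    have hkd : k ∣ orderOf (χ (g : F)) := by
      rw [← hχ]
      apply orderOf_dvd_of_pow_eq_one
      apply MulChar.ext
      intro a
      obtain ⟨n, hn⟩ := hgen a
      rw [MulChar.one_apply_coe, MulChar.pow_apply_coe, ← hn,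
        Units.val_pow_eq_pow_val, map_pow, ← pow_mul, mul_comm, pow_mul,
        pow_orderOf_eq_one, one_pow]
    have hζ : orderOf (χ (g : F)) = k :=
      Nat.dvd_antisymm (orderOf_dvd_iff_pow_eq_one.mpr hζk) hkd
    obtain ⟨n, hn⟩ := hgen (Units.mk0 x hx)
    have hxg : x = ((g : F)) ^ n := by
      rw [← Units.val_pow_eq_pow_val, hn]
      rfl
    have h1' : (χ (g : F)) ^ n = 1 := by rw [← map_pow, ← hxg, h1]
    have hkn : k ∣ n := hζ ▸ orderOf_dvd_iff_pow_eq_one.mpr h1'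
    obtain ⟨j, rfl⟩ := hkn
    refine ⟨(g : F) ^ j, pow_ne_zero _ (Units.ne_zero g), ?_⟩
    rw [hxg, ← pow_mul, mul_comm]
  · rintro ⟨c, hc, rfl⟩
    rw [map_pow, ← MulChar.pow_apply' χ hk0, hχk,
      MulChar.one_apply (isUnit_iff_ne_zero.mpr hc)]

lemma chipow_ne_one (k : ℕ) (χ : MulChar F ℂ) (hχ : orderOf χ = k)
    {s : ℕ} (hs0 : 0 < s) (hsk : s < k) : χ ^ s ≠ 1 := by
  intro h
  have hd : k ∣ s := hχ ▸ orderOf_dvd_iff_pow_eq_one.mpr h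
  have := Nat.le_of_dvd hs0 hd
  omega

lemma chi_neg_one (q k m : ℕ) (hk : 2 ≤ k) (hkeven : Even k)
    (hq : Fintype.card F = q) (hqm : q = 2 * k * m + (k + 1))
    (χ : MulChar F ℂ) (hχ : orderOf χ = k) : χ (-1) = -1 := by
  have h1 : χ (-1) * χ (-1) = 1 := by
    rw [← map_mul]
    norm_num
  rcases mul_self_eq_one_iff.mp h1 with h | h
  · exfalso
    exact no_kth_root_neg_one q k m hk hkeven hq hqm
      ((kernel_iff k (by omega) χ hχ (-1) (neg_ne_zero.mpr one_ne_zero)).mp h)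
  · exact h

lemma e_eq (k : ℕ) (hk0 : k ≠ 0) (χ : MulChar F ℂ) (hχ : orderOf χ = k)
    (x : F) [Decidable (∃ c : F, c ≠ 0 ∧ x = c ^ k)] :
    (∑ s ∈ Finset.range k, (χ ^ s) x) =
      if ∃ c : F, c ≠ 0 ∧ x = c ^ k then (k : ℂ) else 0 := by
  by_cases hx : x = 0
  · subst hx
    rw [if_neg]
    · apply Finset.sum_eq_zero
      intro s _
      exact (χ ^ s).map_nonunit (by simp)
    · rintro ⟨c, hc, h0⟩
      exact hc ((pow_eq_zero_iff hk0).mp h0.symm)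
  · have hterm : ∀ s ∈ Finset.range k, (χ ^ s) x = (χ x) ^ s := by
      intro s _
      rcases Nat.eq_zero_or_pos s with rfl | hs
      · rw [pow_zero, pow_zero, MulChar.one_apply (isUnit_iff_ne_zero.mpr hx)]
      · exact MulChar.pow_apply' χ (by omega) x
    rw [Finset.sum_congr rfl hterm]
    by_cases h1 : χ x = 1
    · rw [if_pos ((kernel_iff k hk0 χ hχ x hx).mp h1)]
      simp [h1]
    · rw [if_neg (fun hP => h1 ((kernel_iff k hk0 χ hχ x hx).mpr hP))]
      have hxk : (χ x) ^ k = 1 := by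
        have hχk : χ ^ k = 1 := by rw [← hχ]; exact pow_orderOf_eq_one χ
        rw [← MulChar.pow_apply' χ hk0, hχk,
          MulChar.one_apply (isUnit_iff_ne_zero.mpr hx)]
      rw [geom_sum_eq h1, hxk]
      simp

end NT

theorem stmt_2 {F : Type} [Field F] [Fintype F] [DecidableEq F] (q k : ℕ)
    (hk : 2 ≤ k) (hkeven : Even k) (hq : Fintype.card F = q)
    (hmod : q % (2 * k) = k + 1)
    (χ : MulChar F ℂ) (hχ : orderOf χ = k) :
    (k : ℂ) ^ 3 * (transK (fun a b : F => ∃ c : F, c ≠ 0 ∧ b - a = c ^ k) 3 : ℕ) =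
      (q : ℂ) * ((q : ℂ) - 1) * (Rk k χ + (q : ℂ) - 2 * (k : ℂ) + 1) := by
  classical
  have hk0 : k ≠ 0 := by omega
  haveI : NeZero k := ⟨hk0⟩
  obtain ⟨m, hm⟩ : ∃ m, q = 2 * k * m + (k + 1) := by
    refine ⟨q / (2 * k), ?_⟩
    have := Nat.div_add_mod q (2 * k)
    omega
  have hq3 : 3 ≤ q := by omega
  have hroot : ¬ ∃ c : F, c ≠ 0 ∧ (-1 : F) = c ^ k :=
    no_kth_root_neg_one q k m hk hkeven hq hm
  have hneg : χ (-1) = -1 := chi_neg_one q k m hk hkeven hq hm χ hχ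
  set P : F → Prop := fun x => ∃ c : F, c ≠ 0 ∧ x = c ^ k with hPdef
  set e : F → ℂ := fun x => ∑ s ∈ Finset.range k, (χ ^ s) x with hedef
  have heeq : ∀ x : F, e x = if P x then (k : ℂ) else 0 := fun x => e_eq k hk0 χ hχ x
  have hP0 : ¬ P (0 : F) := by
    rintro ⟨c, hc, h0⟩
    exact hc ((pow_eq_zero_iff hk0).mp h0.symm)
  have he0 : e (0 : F) = 0 := by rw [heeq, if_neg hP0]
  -- edge facts
  have hedge_ne : ∀ x y : F, (∃ c : F, c ≠ 0 ∧ y - x = c ^ k) → x ≠ y := by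
    rintro x y ⟨c, hc, hcy⟩ rfl
    simp only [sub_self] at hcy
    exact hc ((pow_eq_zero_iff hk0).mp hcy.symm)
  have hedge_anti : ∀ x y : F, (∃ c : F, c ≠ 0 ∧ y - x = c ^ k) →
      ¬ (∃ c : F, c ≠ 0 ∧ x - y = c ^ k) := by
    rintro x y ⟨c, hc, hcy⟩ ⟨d, hd, hdy⟩
    apply hroot
    have hyx : y - x ≠ 0 := by rw [hcy]; exact pow_ne_zero _ hc
    refine ⟨d * c⁻¹, mul_ne_zero hd (inv_ne_zero hc), ?_⟩
    rw [mul_pow, inv_pow, ← hcy, ← hdy]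
    have hxy : x - y = -(y - x) := by ring
    rw [hxy, neg_mul, mul_inv_cancel₀ hyx]
  -- reduce transK to triple count
  rw [transK_three_eq _ hedge_ne hedge_anti]
  have hSval : (({p : F × F × F |
      (fun a b : F => ∃ c : F, c ≠ 0 ∧ b - a = c ^ k) p.1 p.2.1 ∧
      (fun a b : F => ∃ c : F, c ≠ 0 ∧ b - a = c ^ k) p.2.1 p.2.2 ∧
      (fun a b : F => ∃ c : F, c ≠ 0 ∧ b - a = c ^ k) p.1 p.2.2}.ncard : ℕ) : ℂ) =
      ∑ a : F, ∑ b : F, ∑ c : F,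
        (if P (b - a) ∧ P (c - b) ∧ P (c - a) then (1 : ℂ) else 0) := by
    rw [Set.ncard_eq_toFinset_card', Set.toFinset_setOf, Finset.card_filter]
    push_cast
    rw [Fintype.sum_prod_type]
    exact Finset.sum_congr rfl fun a _ => by rw [Fintype.sum_prod_type]
  rw [hSval]
  -- pointwise: indicator times k^3 equals product of e's
  have hpoint : ∀ a b c : F,
      (if P (b - a) ∧ P (c - b) ∧ P (c - a) then (1 : ℂ) else 0) * (k : ℂ) ^ 3
        = e (b - a) * e (c - b) * e (c - a) := by
    intro a b c
    by_cases h1 : P (b - a)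
    · by_cases h2 : P (c - b)
      · by_cases h3 : P (c - a)
        · rw [if_pos ⟨h1, h2, h3⟩, heeq, heeq, heeq, if_pos h1, if_pos h2, if_pos h3]
          ring
        · rw [if_neg (fun h => h3 h.2.2), heeq (c - a), if_neg h3]
          ring
      · rw [if_neg (fun h => h2 h.2.1), heeq (c - b), if_neg h2]
        ring
    · rw [if_neg (fun h => h1 h.1), heeq (b - a), if_neg h1]
      ring
  -- substitution to convolution form
  have hsub : ∀ a : F, (∑ b : F, ∑ c : F, e (b - a) * e (c - b) * e (c - a))
      = ∑ x : F, ∑ y : F, e x * e y * e (x + y) := by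
    intro a
    have h1 : ∀ b : F, (∑ c : F, e (b - a) * e (c - b) * e (c - a))
        = ∑ y : F, e (b - a) * e y * e (y + (b - a)) := by
      intro b
      rw [← Equiv.sum_comp (Equiv.addLeft b) (fun c => e (b - a) * e (c - b) * e (c - a))]
      refine Finset.sum_congr rfl fun y _ => ?_
      have e1 : b + y - b = y := by ring
      have e2 : b + y - a = y + (b - a) := by ring
      simp only [Equiv.coe_addLeft, e1, e2]
    rw [Finset.sum_congr rfl fun b _ => h1 b]
    rw [← Equiv.sum_comp (Equiv.addLeft a)
      (fun b => ∑ y : F, e (b - a) * e y * e (y + (b - a)))]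
    refine Finset.sum_congr rfl fun x _ => ?_
    refine Finset.sum_congr rfl fun y _ => ?_
    have e1 : a + x - a = x := by ring
    simp only [Equiv.coe_addLeft, e1]
    ring
  -- multiplicativity of P
  have hPmul : ∀ u : F, u ≠ 0 → P u → ∀ w, P (u * w) ↔ P w := by
    rintro u hu ⟨d, hd, hud⟩ w
    constructor
    · rintro ⟨c, hc, hcw⟩
      refine ⟨c * d⁻¹, mul_ne_zero hc (inv_ne_zero hd), ?_⟩
      have hw : w = c ^ k * u⁻¹ := by
        field_simp
        linear_combination hcw
      rw [hw, mul_pow, inv_pow, ← hud]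
    · rintro ⟨c, hc, rfl⟩
      exact ⟨d * c, mul_ne_zero hd hc, by rw [mul_pow, ← hud]⟩
  have hkey : ∀ u : F, u ≠ 0 → ∀ w₁ w₂ : F,
      e (u * w₁) * e (u * w₂) * e u = e w₁ * e w₂ * e u := by
    intro u hu w₁ w₂
    by_cases hPu : P u
    · have hcon : ∀ w : F, e (u * w) = e w := by
        intro w
        rw [heeq, heeq]
        exact if_congr (hPmul u hu hPu w) rfl rfl
      rw [hcon, hcon]
    · have heu : e u = 0 := by rw [heeq, if_neg hPu]
      rw [heu]
      ring
  -- factorization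
  have hW : (∑ x : F, ∑ y : F, e x * e y * e (x + y))
      = (∑ u : F, e u) * (∑ a : F, e a * e (1 - a)) := by
    have h1 : ∀ x : F, (∑ y : F, e x * e y * e (x + y))
        = ∑ u : F, e x * e (u - x) * e u := by
      intro x
      rw [← Equiv.sum_comp (Equiv.addLeft x) (fun u => e x * e (u - x) * e u)]
      refine Finset.sum_congr rfl fun y _ => ?_
      have e1 : x + y - x = y := by ring
      simp only [Equiv.coe_addLeft, e1]
    rw [Finset.sum_congr rfl fun x _ => h1 x, Finset.sum_comm]
    have h2 : ∀ u : F, (∑ x : F, e x * e (u - x) * e u)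
        = (∑ a : F, e a * e (1 - a)) * e u := by
      intro u
      by_cases hu : u = 0
      · subst hu
        rw [he0]
        simp
      · rw [← Equiv.sum_comp (Equiv.mulLeft₀ u hu) (fun x => e x * e (u - x) * e u),
          Finset.sum_mul]
        refine Finset.sum_congr rfl fun a _ => ?_
        have e1 : u - u * a = u * (1 - a) := by ring
        simp only [Equiv.mulLeft₀_apply, e1]
        exact hkey u hu a (1 - a)
    rw [Finset.sum_congr rfl fun u _ => h2 u, ← Finset.mul_sum, mul_comm]
  -- total character sum
  have hE : (∑ u : F, e u) = (q : ℂ) - 1 := by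
    simp only [hedef]
    rw [Finset.sum_comm]
    rw [Finset.sum_eq_single_of_mem 0 (Finset.mem_range.mpr (by omega))]
    · rw [pow_zero, MulChar.sum_one_eq_card_units, Fintype.card_units, hq]
      push_cast [Nat.cast_sub (by omega : 1 ≤ q)]
      ring
    · intro s hs hs0
      exact MulChar.sum_eq_zero_of_ne_one
        (chipow_ne_one k χ hχ (by omega) (Finset.mem_range.mp hs))
  -- Jacobi sum expansion
  have hJ1 : (∑ a : F, e a * e (1 - a))
      = ∑ s ∈ Finset.range k, ∑ t ∈ Finset.range k, jac (χ ^ s) (χ ^ t) := by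
    have hpt : ∀ a : F, e a * e (1 - a)
        = ∑ s ∈ Finset.range k, ∑ t ∈ Finset.range k, (χ ^ s) a * (χ ^ t) (1 - a) := by
      intro a
      simp only [hedef]
      rw [Finset.sum_mul_sum]
    rw [Finset.sum_congr rfl fun a _ => hpt a, Finset.sum_comm]
    refine Finset.sum_congr rfl fun s _ => ?_
    rw [Finset.sum_comm]
    rfl
  -- evaluate the Jacobi sums
  have hsplit : Finset.range k = insert 0 (Finset.Icc 1 (k - 1)) := by
    ext s
    simp only [Finset.mem_range, Finset.mem_insert, Finset.mem_Icc]
    omega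
  have h0notin : (0 : ℕ) ∉ Finset.Icc 1 (k - 1) := by simp
  have hIcccard : (Finset.Icc 1 (k - 1)).card = k - 1 := by
    rw [Nat.card_Icc]
    omega
  have hmem : ∀ s ∈ Finset.Icc 1 (k - 1), χ ^ s ≠ 1 := by
    intro s hs
    rw [Finset.mem_Icc] at hs
    exact chipow_ne_one k χ hχ (by omega) (by omega)
  have hQ2 : jac (χ ^ 0) (χ ^ 0) = (q : ℂ) - 2 := by
    rw [pow_zero, jac_eq_jacobiSum, jacobiSum_one_one, hq]
  have hrow : ∀ t ∈ Finset.Icc 1 (k - 1), jac (χ ^ 0) (χ ^ t) = -1 := by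
    intro t ht
    rw [pow_zero, jac_eq_jacobiSum, jacobiSum_one_nontrivial (hmem t ht)]
  have hcol : ∀ s ∈ Finset.Icc 1 (k - 1), jac (χ ^ s) (χ ^ 0) = -1 := by
    intro s hs
    rw [pow_zero, jac_eq_jacobiSum, jacobiSum_comm, jacobiSum_one_nontrivial (hmem s hs)]
  have hdiag : ∀ s ∈ Finset.Icc 1 (k - 1),
      (∑ t ∈ Finset.Icc 1 (k - 1),
        if ¬((s : ZMod k) + (t : ZMod k) ≠ 0) then jac (χ ^ s) (χ ^ t) else 0)
        = -(-1 : ℂ) ^ s := by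
    intro s hs
    rw [Finset.mem_Icc] at hs
    rw [Finset.sum_eq_single_of_mem (k - s) (Finset.mem_Icc.mpr ⟨by omega, by omega⟩)]
    · rw [if_pos]
      · have hinv : χ ^ (k - s) = (χ ^ s)⁻¹ := by
          rw [eq_inv_iff_mul_eq_one, ← pow_add]
          have hks : k - s + s = k := by omega
          rw [hks, ← hχ]
          exact pow_orderOf_eq_one χ
        rw [hinv, jac_eq_jacobiSum,
          jacobiSum_nontrivial_inv (hmem s (Finset.mem_Icc.mpr ⟨by omega, by omega⟩)),
          MulChar.pow_apply' χ (by omega : s ≠ 0), hneg]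
      · rw [not_not, ← Nat.cast_add]
        have hks : s + (k - s) = k := by omega
        rw [hks]
        exact ZMod.natCast_self k
    · intro t ht hts
      rw [if_neg]
      rw [not_not, ← Nat.cast_add]
      intro h0
      rw [Finset.mem_Icc] at ht
      obtain ⟨j, hj⟩ := (ZMod.natCast_eq_zero_iff _ k).mp h0
      have hj1 : j = 1 := by
        have h0' : j ≠ 0 := by rintro rfl; omega
        have h2' : j < 2 := by
          by_contra hcon
          push_neg at hcon
          have : k * 2 ≤ k * j := Nat.mul_le_mul_left k hcon
          omega
        omega
      subst hj1
      exact hts (by omega)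
  have hIccneg : (∑ s ∈ Finset.Icc 1 (k - 1), (-1 : ℂ) ^ s) = -1 := by
    have h0 : (∑ s ∈ Finset.range k, (-1 : ℂ) ^ s) = 0 := by
      rw [neg_one_geom_sum, if_pos hkeven]
    rw [hsplit, Finset.sum_insert h0notin, pow_zero] at h0
    linear_combination h0
  have hinner0 : (∑ t ∈ insert 0 (Finset.Icc 1 (k - 1)), jac (χ ^ 0) (χ ^ t))
      = (q : ℂ) - 2 - ((k : ℂ) - 1) := by
    rw [Finset.sum_insert h0notin, hQ2, Finset.sum_congr rfl hrow, Finset.sum_const,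
      hIcccard, nsmul_eq_mul, Nat.cast_sub (by omega : 1 ≤ k)]
    push_cast
    ring
  have hinnerS : ∀ s ∈ Finset.Icc 1 (k - 1),
      (∑ t ∈ insert 0 (Finset.Icc 1 (k - 1)), jac (χ ^ s) (χ ^ t))
      = -1 + ((∑ t ∈ Finset.Icc 1 (k - 1),
            if (s : ZMod k) + (t : ZMod k) ≠ 0 then jac (χ ^ s) (χ ^ t) else 0)
          + -(-1 : ℂ) ^ s) := by
    intro s hs
    rw [Finset.sum_insert h0notin, hcol s hs, ← hdiag s hs, ← Finset.sum_add_distrib]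
    congr 1
    refine Finset.sum_congr rfl fun t ht => ?_
    by_cases hc : (s : ZMod k) + (t : ZMod k) ≠ 0 <;> simp [hc]
  have hJval : (∑ a : F, e a * e (1 - a)) = Rk k χ + (q : ℂ) - 2 * (k : ℂ) + 1 := by
    rw [hJ1, hsplit, Finset.sum_insert h0notin, hinner0,
      Finset.sum_congr rfl hinnerS, Finset.sum_add_distrib, Finset.sum_add_distrib,
      Finset.sum_const, hIcccard]
    have hRk : (∑ s ∈ Finset.Icc 1 (k - 1), ∑ t ∈ Finset.Icc 1 (k - 1),
        if (s : ZMod k) + (t : ZMod k) ≠ 0 then jac (χ ^ s) (χ ^ t) else 0) = Rk k χ := rfl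
    have hN : (∑ s ∈ Finset.Icc 1 (k - 1), -(-1 : ℂ) ^ s) = 1 := by
      rw [Finset.sum_neg_distrib, hIccneg]
      ring
    rw [hRk, hN, nsmul_eq_mul, Nat.cast_sub (by omega : 1 ≤ k)]
    push_cast
    ring
  -- put everything together
  calc (k : ℂ) ^ 3 * (∑ a : F, ∑ b : F, ∑ c : F,
        (if P (b - a) ∧ P (c - b) ∧ P (c - a) then (1 : ℂ) else 0))
      = ∑ a : F, ∑ b : F, ∑ c : F,
        (if P (b - a) ∧ P (c - b) ∧ P (c - a) then (1 : ℂ) else 0) * (k : ℂ) ^ 3 := by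
        rw [Finset.mul_sum]
        refine Finset.sum_congr rfl fun a _ => ?_
        rw [Finset.mul_sum]
        refine Finset.sum_congr rfl fun b _ => ?_
        rw [Finset.mul_sum]
        exact Finset.sum_congr rfl fun c _ => by ring
    _ = ∑ a : F, ∑ b : F, ∑ c : F, e (b - a) * e (c - b) * e (c - a) := by
        refine Finset.sum_congr rfl fun a _ => Finset.sum_congr rfl fun b _ =>
          Finset.sum_congr rfl fun c _ => hpoint a b c
    _ = ∑ _a : F, ((q : ℂ) - 1) * (Rk k χ + (q : ℂ) - 2 * (k : ℂ) + 1) := by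
        refine Finset.sum_congr rfl fun a _ => ?_
        rw [hsub a, hW, hE, hJval]
    _ = (q : ℂ) * (((q : ℂ) - 1) * (Rk k χ + (q : ℂ) - 2 * (k : ℂ) + 1)) := by
        rw [Finset.sum_const, Finset.card_univ, hq, nsmul_eq_mul]
    _ = (q : ℂ) * ((q : ℂ) - 1) * (Rk k χ + (q : ℂ) - 2 * (k : ℂ) + 1) := by ring
end

section
/- Let q ≡ 3 (mod 4) be a prime power. Then 2^6 · K_4(G_2(q)) = q(q−1)(q−3)(q−7), where G_2(q) is the Paley tournament (the 2nd power Paley digraph) of order q. -/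
/-!
Order a transitive 4-set as `a → b → x → y`; then `x` and `y` lie in the common
out-neighbourhood `N(a, b)` and `x → y`. A tournament on `k` vertices has `k.choose 2` arcs, so
`K₄ = ∑_{a → b} (#N(a, b)).choose 2`. The Paley tournament is doubly regular with
`#N(a, b) = (q - 3) / 4`: `x ∈ N(a, b)` means `x - a = s²` and `x - b = t²` with `s, t ≠ 0`,
and factoring `(t - s) (t + s) = a - b` shows that the conic `t² - s² = a - b` has `q - 3`
points off the axes, four over each `x`. Hence `K₄ = q.choose 2 * ((q - 3) / 4).choose 2`.
-/

open Finset

structure IsTournament {V : Type*} (r : V → V → Prop) : Prop where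
  asymm : ∀ ⦃a b⦄, r a b → ¬ r b a
  total : ∀ ⦃a b⦄, a ≠ b → r a b ∨ r b a

section Chains

variable {V : Type} {r : V → V → Prop} {m : ℕ}

theorem injective_of_chain (hr : ∀ ⦃a b⦄, r a b → ¬ r b a) {f : Fin m → V}
    (hf : ∀ i j, i < j → r (f i) (f j)) : Function.Injective f := by
  intro i j hij
  by_contra hne
  rcases lt_or_gt_of_ne hne with h | h
  · exact hr (hf i j h) (hij ▸ hf i j h)
  · exact hr (hf j i h) (hij ▸ hf j i h)

theorem chain_eq_of_image_eq [DecidableEq V] (hr : ∀ ⦃a b⦄, r a b → ¬ r b a)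
    {f g : Fin m → V} (hf : ∀ i j, i < j → r (f i) (f j))
    (hg : ∀ i j, i < j → r (g i) (g j))
    (h : image f univ = image g univ) : f = g := by
  have hmem : ∀ i, ∃ j, g j = f i := fun i => by
    simpa [h] using mem_image_of_mem f (mem_univ i)
  choose e he using hmem
  -- `g ∘ e = f`, and asymmetry forbids `e` to invert a pair
  have hmono : StrictMono e := by
    intro i j hij
    refine lt_of_not_ge fun hji => ?_
    rcases hji.lt_or_eq with hlt | heq
    · exact hr (hf i j hij) (he i ▸ he j ▸ hg _ _ hlt)
    · exact (injective_of_chain hr hf).ne hij.ne (he i ▸ he j ▸ congrArg g heq.symm)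
  funext i
  rw [← he i, hmono.eq_id]
  rfl

theorem transK_eq_ncard_chains [DecidableEq V] (hr : ∀ ⦃a b⦄, r a b → ¬ r b a) :
    transK r m = {f : Fin m → V | ∀ i j, i < j → r (f i) (f j)}.ncard := by
  have himage : {s : Finset V | ∃ f : Fin m → V, Function.Injective f ∧ s = image f univ ∧
      ∀ i j, i < j → r (f i) (f j)} =
      (fun f : Fin m → V => image f univ) '' {f | ∀ i j, i < j → r (f i) (f j)} := by
    ext s
    constructor
    · rintro ⟨f, -, rfl, hf⟩
      exact ⟨f, hf, rfl⟩
    · rintro ⟨f, hf, rfl⟩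
      exact ⟨f, injective_of_chain hr hf, rfl, hf⟩
  rw [transK, himage]
  exact Set.InjOn.ncard_image fun f hf g hg => chain_eq_of_image_eq hr hf hg

end Chains

def finFourEquiv {V : Type*} : (Fin 4 → V) ≃ Σ _ : V × V, V × V where
  toFun f := ⟨(f 0, f 1), (f 2, f 3)⟩
  invFun z := ![z.1.1, z.1.2, z.2.1, z.2.2]
  left_inv f := by ext i; fin_cases i <;> rfl
  right_inv _ := rfl

section CommonOut

variable {V : Type*} (r : V → V → Prop) [Fintype V] [DecidableRel r]

def commonOut (a b : V) : Finset V := {x | r a x ∧ r b x}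

variable {r}

theorem chain_four_iff {f : Fin 4 → V} :
    (∀ i j, i < j → r (f i) (f j)) ↔ r (f 0) (f 1) ∧
      (f 2, f 3) ∈ commonOut r (f 0) (f 1) ×ˢ commonOut r (f 0) (f 1) ∧ r (f 2) (f 3) := by
  simp only [commonOut, mem_product, mem_filter_univ]
  constructor
  · intro h
    exact ⟨h 0 1 (by decide), ⟨⟨h 0 2 (by decide), h 1 2 (by decide)⟩,
      ⟨h 0 3 (by decide), h 1 3 (by decide)⟩⟩, h 2 3 (by decide)⟩
  · rintro ⟨h01, ⟨⟨h02, h12⟩, ⟨h03, h13⟩⟩, h23⟩ i j hij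
    fin_cases i <;> fin_cases j <;> first | assumption | exact absurd hij (by decide)

theorem ncard_chains_four :
    {f : Fin 4 → V | ∀ i j, i < j → r (f i) (f j)}.ncard =
      ∑ p : V × V with r p.1 p.2,
        #{w ∈ commonOut r p.1 p.2 ×ˢ commonOut r p.1 p.2 | r w.1 w.2} := by
  rw [← card_sigma, Set.ncard_eq_toFinset_card']
  refine card_equiv finFourEquiv fun f => ?_
  simp only [Set.toFinset_ofPred, mem_sigma, mem_filter, mem_univ, true_and]
  exact chain_four_iff (r := r)

end CommonOut

namespace IsTournament

variable {V : Type*} {r : V → V → Prop}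

theorem ne_of_rel (hr : IsTournament r) {a b : V} (h : r a b) : a ≠ b := by
  rintro rfl
  exact hr.asymm h h

variable [DecidableEq V] [DecidableRel r]

theorem card_arcs (hr : IsTournament r) (S : Finset V) :
    #{w ∈ S ×ˢ S | r w.1 w.2} = (#S).choose 2 := by
  have hunion : {w ∈ S ×ˢ S | r w.1 w.2} ∪ {w ∈ S ×ˢ S | r w.2 w.1} = S.offDiag := by
    ext ⟨x, y⟩
    simp only [mem_union, mem_filter, mem_product, mem_offDiag]
    constructor
    · rintro (⟨hxy, h⟩ | ⟨hxy, h⟩)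
      exacts [⟨hxy.1, hxy.2, hr.ne_of_rel h⟩, ⟨hxy.1, hxy.2, (hr.ne_of_rel h).symm⟩]
    · rintro ⟨hx, hy, hne⟩
      exact (hr.total hne).imp (⟨⟨hx, hy⟩, ·⟩) (⟨⟨hx, hy⟩, ·⟩)
  have hdisj : Disjoint {w ∈ S ×ˢ S | r w.1 w.2} {w ∈ S ×ˢ S | r w.2 w.1} :=
    disjoint_filter.2 fun _ _ h h' => hr.asymm h h'
  have hswap : #{w ∈ S ×ˢ S | r w.2 w.1} = #{w ∈ S ×ˢ S | r w.1 w.2} :=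
    card_equiv (Equiv.prodComm V V) fun w => by simp [and_comm]
  have htwice := card_union_of_disjoint hdisj
  rw [hunion, offDiag_card, hswap] at htwice
  rw [Nat.choose_two_right, Nat.mul_sub_one, htwice]
  omega

end IsTournament

theorem IsTournament.transK_four {V : Type} [Fintype V] [DecidableEq V] {r : V → V → Prop}
    [DecidableRel r] (hr : IsTournament r) {k : ℕ}
    (hk : ∀ a b, r a b → #(commonOut r a b) = k) :
    transK r 4 = (Fintype.card V).choose 2 * k.choose 2 := by
  rw [transK_eq_ncard_chains hr.asymm, ncard_chains_four]
  calc ∑ p : V × V with r p.1 p.2,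
        #{w ∈ commonOut r p.1 p.2 ×ˢ commonOut r p.1 p.2 | r w.1 w.2}
      = ∑ p : V × V with r p.1 p.2, k.choose 2 :=
        sum_congr rfl fun p hp => by rw [hr.card_arcs, hk _ _ (mem_filter.1 hp).2]
    _ = (Fintype.card V).choose 2 * k.choose 2 := by
      rw [sum_const, smul_eq_mul, ← univ_product_univ, hr.card_arcs, card_univ]

section Paley

variable {F : Type*} [Field F] [Fintype F]

def paleyAdj (a b : F) : Prop := ∃ c : F, c ≠ 0 ∧ b - a = c ^ 2

theorem ringChar_ne_two_of_card_mod_four (hF : Fintype.card F % 4 = 3) : ringChar F ≠ 2 := by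
  intro h
  have := FiniteField.even_card_of_char_two h
  omega

variable [DecidableEq F]

theorem paleyAdj_iff {a b : F} : paleyAdj a b ↔ quadraticChar F (b - a) = 1 := by
  constructor
  · rintro ⟨c, hc, h⟩
    rw [h, quadraticChar_sq_one' hc]
  · intro h
    have hba : b - a ≠ 0 := fun h0 => by simp [h0] at h
    obtain ⟨c, hc⟩ := (quadraticChar_one_iff_isSquare hba).1 h
    exact ⟨c, fun h0 => hba (by simp [hc, h0]), by rw [hc, sq]⟩

instance : DecidableRel (paleyAdj (F := F)) := fun _ _ => decidable_of_iff _ paleyAdj_iff.symm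

theorem quadraticChar_neg_of_card_mod_four (hF : Fintype.card F % 4 = 3) (a : F) :
    quadraticChar F (-a) = -quadraticChar F a := by
  have hneg : quadraticChar F (-1) = -1 :=
    quadraticChar_neg_one_iff_not_isSquare.2 fun h => FiniteField.isSquare_neg_one_iff.1 h hF
  rw [neg_eq_neg_one_mul, map_mul, hneg, neg_one_mul]

theorem isTournament_paleyAdj (hF : Fintype.card F % 4 = 3) :
    IsTournament (paleyAdj (F := F)) where
  asymm a b hab hba := by
    rw [paleyAdj_iff] at hab hba
    rw [← neg_sub, quadraticChar_neg_of_card_mod_four hF, hab] at hba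
    norm_num at hba
  total a b hne := by
    simp only [paleyAdj_iff, ← neg_sub b a, quadraticChar_neg_of_card_mod_four hF]
    rcases quadraticChar_dichotomy (sub_ne_zero.2 hne.symm) with h | h
    · exact .inl h
    · exact .inr (by rw [h, neg_neg])

theorem card_filter_sq_eq (hF : ringChar F ≠ 2) (d : F) :
    (#{s : F | s ^ 2 = d} : ℤ) = quadraticChar F d + 1 := by
  rw [← quadraticChar_card_sqrts hF, Set.toFinset_ofPred]

theorem card_filter_sq_eq_two (hF : ringChar F ≠ 2) {d : F} (hd : quadraticChar F d = 1) :
    #{s : F | s ^ 2 = d} = 2 := by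
  have := card_filter_sq_eq hF d
  rw [hd] at this
  omega

theorem card_ne_zero_sq_ne_of_card_mod_four (hF : Fintype.card F % 4 = 3) {d : F} (hd : d ≠ 0) :
    #{v : F | v ≠ 0 ∧ v ^ 2 ≠ d ∧ v ^ 2 ≠ -d} = Fintype.card F - 3 := by
  have hF2 := ringChar_ne_two_of_card_mod_four hF
  set S : Finset F := {v | v ^ 2 = d}
  set T : Finset F := {v | v ^ 2 = -d}
  have hcompl : ({v : F | v ≠ 0 ∧ v ^ 2 ≠ d ∧ v ^ 2 ≠ -d} : Finset F) =
      univ \ insert 0 (S ∪ T) := by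
    ext v
    simp only [S, T, mem_filter_univ, mem_sdiff, mem_univ, mem_insert, mem_union, true_and]
    tauto
  have h0 : (0 : F) ∉ S ∪ T := by
    simp [S, T, hd, eq_comm (a := (0 : F))]
  have hdisj : Disjoint S T :=
    disjoint_filter.2 fun v _ h h' => hd <|
      (Ring.eq_self_iff_eq_zero_of_char_ne_two hF2).1 (h'.symm.trans h)
  -- exactly one of `d` and `-d` is a square, since `-1` is not
  have htwo : #S + #T = 2 := by
    have hS : (#S : ℤ) = quadraticChar F d + 1 := card_filter_sq_eq hF2 d
    have hT : (#T : ℤ) = -quadraticChar F d + 1 := by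
      rw [← quadraticChar_neg_of_card_mod_four hF]
      exact card_filter_sq_eq hF2 (-d)
    omega
  rw [hcompl, card_sdiff_of_subset (subset_univ _), card_univ, card_insert_of_notMem h0,
    card_union_of_disjoint hdisj]
  omega

theorem card_sq_sub_sq_eq_card_sq_ne (h2 : (2 : F) ≠ 0) {d : F} (hd : d ≠ 0) :
    #{p : F × F | p.1 ≠ 0 ∧ p.2 ≠ 0 ∧ p.2 ^ 2 - p.1 ^ 2 = d} =
      #{v : F | v ≠ 0 ∧ v ^ 2 ≠ d ∧ v ^ 2 ≠ -d} := by
  -- `v = t - s`, so `t + s = d / v`; then `s = 0` and `t = 0` mean `d / v = v` and `d / v = -v`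
  refine card_nbij' (fun p => p.2 - p.1) (fun v => ((d / v - v) / 2, (d / v + v) / 2))
    ?_ ?_ ?_ ?_
  · rintro ⟨s, t⟩ hp
    simp only [coe_filter, mem_univ, true_and, Set.mem_ofPred_eq] at hp ⊢
    obtain ⟨hs, ht, hst⟩ := hp
    have hv : t - s ≠ 0 := fun h => hd (by rw [← hst, sub_eq_zero.1 h, sub_self])
    refine ⟨hv, fun h => hs ?_, fun h => ht ?_⟩
    · have : (t - s) * (2 * s) = 0 := by linear_combination hst - h
      simpa [hv, h2] using this
    · have : (t - s) * (2 * t) = 0 := by linear_combination h + hst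
      simpa [hv, h2] using this
  · intro v hv
    simp only [coe_filter, mem_univ, true_and, Set.mem_ofPred_eq] at hv ⊢
    obtain ⟨hv0, hvd, hvd'⟩ := hv
    refine ⟨fun h => hvd ?_, fun h => hvd' ?_, ?_⟩
    · field_simp at h; linear_combination -h
    · field_simp at h; linear_combination h
    · field_simp; ring
  · rintro ⟨s, t⟩ hp
    simp only [coe_filter, mem_univ, true_and, Set.mem_ofPred_eq] at hp
    obtain ⟨-, -, hst⟩ := hp
    have hv : t - s ≠ 0 := fun h => hd (by rw [← hst, sub_eq_zero.1 h, sub_self])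
    ext <;> field_simp <;> linear_combination -hst
  · intro v hv
    simp only [coe_filter, mem_univ, true_and, Set.mem_ofPred_eq] at hv
    field_simp [hv.1]
    ring

theorem four_mul_card_commonOut_paleyAdj (hF : Fintype.card F % 4 = 3) {a b : F} (hab : a ≠ b) :
    4 * #(commonOut paleyAdj a b) = Fintype.card F - 3 := by
  have hF2 := ringChar_ne_two_of_card_mod_four hF
  have hd : a - b ≠ 0 := sub_ne_zero.2 hab
  rw [← card_ne_zero_sq_ne_of_card_mod_four hF hd,
    ← card_sq_sub_sq_eq_card_sq_ne (Ring.two_ne_zero hF2) hd]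
  set P : Finset (F × F) := {p | p.1 ≠ 0 ∧ p.2 ≠ 0 ∧ p.2 ^ 2 - p.1 ^ 2 = a - b}
  have hmaps : ∀ p ∈ P, a + p.1 ^ 2 ∈ commonOut paleyAdj a b := by
    rintro ⟨s, t⟩ hp
    simp only [P, mem_filter_univ, commonOut] at hp ⊢
    exact ⟨⟨s, hp.1, by ring⟩, ⟨t, hp.2.1, by linear_combination -hp.2.2⟩⟩
  have hfiber : ∀ x ∈ commonOut paleyAdj a b, #{p ∈ P | a + p.1 ^ 2 = x} = 4 := by
    intro x hx
    simp only [commonOut, mem_filter_univ] at hx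
    obtain ⟨hxa, hxb⟩ := hx
    have hfib : {p ∈ P | a + p.1 ^ 2 = x} =
        ({s | s ^ 2 = x - a} : Finset F) ×ˢ ({t | t ^ 2 = x - b} : Finset F) := by
      obtain ⟨c, hc, hca⟩ := hxa
      obtain ⟨e, he, heb⟩ := hxb
      ext ⟨s, t⟩
      simp only [P, mem_filter, mem_univ, true_and, mem_product]
      constructor
      · rintro ⟨⟨-, -, hst⟩, hs⟩
        exact ⟨by linear_combination hs, by linear_combination hst + hs⟩
      · rintro ⟨hs, ht⟩
        refine ⟨⟨?_, ?_, by linear_combination ht - hs⟩, by linear_combination hs⟩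
        · rintro rfl
          exact hc (pow_eq_zero_iff two_ne_zero |>.1 (by linear_combination -hs - hca))
        · rintro rfl
          exact he (pow_eq_zero_iff two_ne_zero |>.1 (by linear_combination -ht - heb))
    rw [hfib, card_product, card_filter_sq_eq_two hF2 (paleyAdj_iff.1 hxa),
      card_filter_sq_eq_two hF2 (paleyAdj_iff.1 hxb)]
  rw [card_eq_sum_card_fiberwise hmaps, sum_congr rfl hfiber, sum_const, smul_eq_mul, mul_comm]

end Paley

theorem stmt_3 {F : Type} [Field F] [Fintype F] [DecidableEq F] (q : ℕ)
    (hq : Fintype.card F = q) (hmod : q % 4 = 3) :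
    (2 ^ 6 * (transK (fun a b : F => ∃ c : F, c ≠ 0 ∧ b - a = c ^ 2) 4) : ℤ) =
      (q : ℤ) * ((q : ℤ) - 1) * ((q : ℤ) - 3) * ((q : ℤ) - 7) := by
  have hF : Fintype.card F % 4 = 3 := hq ▸ hmod
  have hr := isTournament_paleyAdj hF
  obtain ⟨k, hkq⟩ : ∃ k, 4 * k + 3 = q := ⟨q / 4, by omega⟩
  have hk : ∀ a b : F, paleyAdj a b → #(commonOut paleyAdj a b) = k := fun a b h => by
    have := four_mul_card_commonOut_paleyAdj hF (hr.ne_of_rel h)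
    omega
  have hQ : (2 ^ 6 * (q.choose 2 * k.choose 2 : ℕ) : ℚ) = q * (q - 1) * (q - 3) * (q - 7) := by
    push_cast [Nat.cast_choose_two, ← hkq]
    ring
  change (2 ^ 6 * (transK (paleyAdj (F := F)) 4) : ℤ) = _
  rw [hr.transK_four hk, hq]
  exact_mod_cast hQ
end

section
/- Let F be the finite field with 125 elements. The 4th power Paley digraph G_4(125), with vertex set F and an edge a → b if and only if b − a is a nonzero 4th power in F, contains no transitive subtournament of order 4; that is, there are no four distinct elements a_1, a_2, a_3, a_4 of F such that a_j − a_i is a nonzero 4th power for all 1 ≤ i < j ≤ 4. -/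
/-!
Every nonzero fourth power `z` of `𝔽₁₂₅` satisfies `z ^ 31 = 1`, and `z ^ 31 = z · z⁵ · z²⁵` is the
norm of `z` to `𝔽₅`. After the normalisation `a₀ = 0`, `a₁ = 1` the other two vertices `x`, `y`
satisfy `N x = N (x - 1) = N y = N (y - 1) = N (y - x) = 1`. The first two conditions force the
characteristic polynomial of `x` over `𝔽₅` to be `t³ - s t² + (s - 1) t - 1` with `s ∈ 𝔽₅`, and
since `x ∉ 𝔽₅` it is irreducible; hence `𝔽₁₂₅ ≅ 𝔽₅[t] ⧸ (t³ - s t² + (s - 1) t - 1)` with `x ↦ t`,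
and the conditions on `y` are refuted by evaluating all `125` elements of that quotient.
-/

/-- `a + b t + c t²` in `R[t] ⧸ (t³ - q₂ t² - q₁ t - q₀)` is stored as `(a, b, c)`, with the ring
operations as plain functions on triples, so that the kernel can evaluate them. Its unit is
`(1, 0, 0)`, not the `1 = (1, 1, 1)` of `R × R × R`. -/
abbrev CubicExt (R : Type*) := R × R × R

namespace CubicExt

variable {R S : Type*} [CommRing R] [CommRing S]

/-- Uses `t³ = q₀ + q₁ t + q₂ t²` and `t⁴ = q₂ q₀ + (q₀ + q₂ q₁) t + (q₁ + q₂²) t²`. -/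
def mul (q m n : CubicExt R) : CubicExt R :=
  let c₃ := m.2.1 * n.2.2 + m.2.2 * n.2.1
  let c₄ := m.2.2 * n.2.2
  (m.1 * n.1 + q.1 * c₃ + q.2.2 * q.1 * c₄,
   m.1 * n.2.1 + m.2.1 * n.1 + q.2.1 * c₃ + (q.1 + q.2.2 * q.2.1) * c₄,
   m.1 * n.2.2 + m.2.1 * n.2.1 + m.2.2 * n.1 + q.2.2 * c₃ + (q.2.1 + q.2.2 ^ 2) * c₄)

def pow (q m : CubicExt R) : ℕ → CubicExt R
  | 0 => (1, 0, 0)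
  | k + 1 => mul q (pow q m k) m

def eval (f : R →+* S) (x : S) (m : CubicExt R) : S :=
  f m.1 + f m.2.1 * x + f m.2.2 * x ^ 2

variable {f : R →+* S} {x : S} {q : CubicExt R}

theorem eval_base (r : R) : eval f x (r, 0, 0) = f r := by
  simp [eval]

theorem eval_sub (m n : CubicExt R) : eval f x (m - n) = eval f x m - eval f x n := by
  simp only [eval, Prod.fst_sub, Prod.snd_sub, map_sub]
  ring

theorem eval_mul (hx : x ^ 3 = f q.1 + f q.2.1 * x + f q.2.2 * x ^ 2) (m n : CubicExt R) :
    eval f x (mul q m n) = eval f x m * eval f x n := by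
  simp only [eval, mul, map_add, map_mul, map_pow]
  linear_combination
    (-(f m.2.1 * f n.2.2 + f m.2.2 * f n.2.1) - f m.2.2 * f n.2.2 * (x + f q.2.2)) * hx

theorem eval_pow (hx : x ^ 3 = f q.1 + f q.2.1 * x + f q.2.2 * x ^ 2) (m : CubicExt R) (k : ℕ) :
    eval f x (pow q m k) = eval f x m ^ k := by
  induction k with
  | zero => simp [pow, eval_base]
  | succ k ih => rw [pow, eval_mul hx, ih, pow_succ]

theorem eval_injective [IsDomain S] (hf : Function.Injective f)
    (hx : x ^ 3 = f q.1 + f q.2.1 * x + f q.2.2 * x ^ 2) (k : ℕ)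
    (hnorm : ∀ m ≠ 0, ∃ r ≠ 0, pow q m (k + 1) = (r, 0, 0)) : Function.Injective (eval f x) := by
  intro m n hmn
  by_contra hne
  obtain ⟨r, hr, hpow⟩ := hnorm (m - n) (sub_ne_zero.mpr hne)
  have : f r = 0 := by
    rw [← eval_base (x := x), ← hpow, eval_pow hx, eval_sub, hmn, sub_self, zero_pow k.succ_ne_zero]
  exact hr (hf (this.trans (map_zero f).symm))

end CubicExt

section Norm

variable {F : Type*} [Field F]

/-- `x ^ (1 + p + p²)` is the norm `x · x^p · x^{p²}`; the `s` found is the trace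
`x + x^p + x^{p²}`, which lies in `𝔽_p` because `x ^ p ^ 3 = x`. -/
theorem exists_charpoly_eq_of_norm_eq_one {p : ℕ} [Fact p.Prime] [CharP F p] {x : F}
    (hx : x ^ (1 + p + p ^ 2) = 1) (hx1 : (x - 1) ^ (1 + p + p ^ 2) = 1) :
    ∃ s : ZMod p, ∀ t : F,
      (t - x) * (t - x ^ p) * (t - x ^ p ^ 2) =
        t ^ 3 - ZMod.castHom dvd_rfl F s * t ^ 2 + (ZMod.castHom dvd_rfl F s - 1) * t - 1 := by
  have hnorm : ∀ z : F, z ^ (1 + p + p ^ 2) = z * z ^ p * z ^ p ^ 2 := fun z => by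
    rw [pow_add, pow_add, pow_one]
  have hfix : (x ^ p ^ 2) ^ p = x := by
    obtain ⟨k, rfl⟩ : ∃ k, p = k + 1 := ⟨p - 1, by have := (Fact.out : p.Prime).pos; omega⟩
    calc (x ^ (k + 1) ^ 2) ^ (k + 1) = x * (x ^ (1 + (k + 1) + (k + 1) ^ 2)) ^ k := by
          rw [← pow_mul, ← pow_mul, ← pow_succ']; ring_nf
      _ = x := by rw [hx, one_pow, mul_one]
  have htrace : (x + x ^ p + x ^ p ^ 2) ^ p = x + x ^ p + x ^ p ^ 2 := by
    rw [add_pow_char, add_pow_char, hfix, ← pow_mul, ← sq]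
    ring
  obtain ⟨s, hs⟩ : ∃ s : ZMod p, ZMod.castHom dvd_rfl F s = x + x ^ p + x ^ p ^ 2 := by
    rwa [← Subfield.mem_bot_iff_pow_eq_self F p, ← ZMod.fieldRange_castHom_eq_bot p] at htrace
  have hx1' : (x - 1) * (x ^ p - 1) * (x ^ p ^ 2 - 1) = 1 := by
    have h1 : x ^ p - 1 = (x - 1) ^ p := by rw [sub_pow_char, one_pow]
    have h2 : x ^ p ^ 2 - 1 = (x - 1) ^ p ^ 2 := by rw [sub_pow_char_pow, one_pow]
    rw [h1, h2, ← hnorm, hx1]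
  refine ⟨s, fun t => ?_⟩
  rw [hnorm] at hx
  linear_combination (t ^ 2 - t) * hs - t * hx1' + (t - 1) * hx

end Norm

namespace CubicExt

/-- The modulus `t³ - s t² + (s - 1) t - 1` of `exists_charpoly_eq_of_norm_eq_one`. -/
def normOneModulus {R : Type*} [CommRing R] (s : R) : CubicExt R := (1, 1 - s, s)

theorem exists_pow_thirtyOne_eq_base : ∀ s : ZMod 5,
    (∀ r : ZMod 5, r ^ 3 - s * r ^ 2 + (s - 1) * r - 1 ≠ 0) →
    ∀ m : CubicExt (ZMod 5), m ≠ 0 → ∃ r ≠ 0, pow (normOneModulus s) m 31 = (r, 0, 0) := by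
  decide +kernel

theorem pow_thirtyOne_sub_t_ne_one : ∀ s : ZMod 5,
    (∀ r : ZMod 5, r ^ 3 - s * r ^ 2 + (s - 1) * r - 1 ≠ 0) →
    ∀ n : CubicExt (ZMod 5), pow (normOneModulus s) n 31 = (1, 0, 0) →
      pow (normOneModulus s) (n - (1, 0, 0)) 31 = (1, 0, 0) →
      pow (normOneModulus s) (n - (0, 1, 0)) 31 ≠ (1, 0, 0) := by
  decide +kernel

end CubicExt

instance : Fact (Nat.Prime 5) := ⟨Nat.prime_five⟩

section CharFive

open CubicExt

variable {F : Type*} [Field F] [CharP F 5]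

theorem castHom_ne_of_pow_thirtyOne {x : F} (hx : x ^ 31 = 1) (hx1 : (x - 1) ^ 31 = 1)
    (r : ZMod 5) : ZMod.castHom dvd_rfl F r ≠ x := by
  rintro rfl
  have hF5 : ∀ r : ZMod 5, r ^ 31 = 1 → (r - 1) ^ 31 ≠ 1 := by decide
  refine hF5 r ((ZMod.castHom dvd_rfl F).injective ?_) ((ZMod.castHom dvd_rfl F).injective ?_)
  · rwa [map_pow, map_one]
  · rwa [map_pow, map_sub, map_one]

theorem cubic_ne_zero_of_pow_thirtyOne {x : F} (hx : x ^ 31 = 1) (hx1 : (x - 1) ^ 31 = 1)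
    {s : ZMod 5} (hs : ∀ t : F, (t - x) * (t - x ^ 5) * (t - x ^ 5 ^ 2) =
      t ^ 3 - ZMod.castHom dvd_rfl F s * t ^ 2 + (ZMod.castHom dvd_rfl F s - 1) * t - 1)
    (r : ZMod 5) : r ^ 3 - s * r ^ 2 + (s - 1) * r - 1 ≠ 0 := by
  intro hr
  have hr5 : ZMod.castHom dvd_rfl F r ^ 5 = ZMod.castHom dvd_rfl F r := by
    rw [← map_pow, ZMod.pow_card]
  have hsq : x ^ 5 ^ 2 = (x ^ 5) ^ 5 := by rw [← pow_mul, sq]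
  have hfix : (x ^ 5 ^ 2) ^ 5 = x := by
    rw [← pow_mul, show 5 ^ 2 * 5 = 1 + 31 * 4 by rfl, pow_add, pow_mul, hx, one_pow, mul_one,
      pow_one]
  have hroot : (ZMod.castHom dvd_rfl F r - x) * (ZMod.castHom dvd_rfl F r - x ^ 5) *
      (ZMod.castHom dvd_rfl F r - x ^ 5 ^ 2) = 0 := by
    rw [hs, ← map_zero (ZMod.castHom dvd_rfl F), ← hr]
    simp only [map_add, map_sub, map_mul, map_pow, map_one]
  refine castHom_ne_of_pow_thirtyOne hx hx1 r ?_
  rcases mul_eq_zero.mp hroot with h | h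
  · rcases mul_eq_zero.mp h with h | h
    · exact sub_eq_zero.mp h
    · rw [← hfix, hsq, ← sub_eq_zero.mp h, hr5, hr5]
  · rw [← hfix, ← sub_eq_zero.mp h, hr5]

theorem sub_pow_thirtyOne_ne_one [Fintype F] (hcard : Fintype.card F = 125) {x y : F}
    (hx : x ^ 31 = 1) (hx1 : (x - 1) ^ 31 = 1) (hy : y ^ 31 = 1) (hy1 : (y - 1) ^ 31 = 1) :
    (y - x) ^ 31 ≠ 1 := by
  obtain ⟨s, hs⟩ := exists_charpoly_eq_of_norm_eq_one (p := 5) hx hx1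
  have hirred := cubic_ne_zero_of_pow_thirtyOne hx hx1 hs
  set ι := ZMod.castHom (dvd_rfl) F
  have hmod : x ^ 3 = ι (normOneModulus s).1 + ι (normOneModulus s).2.1 * x +
      ι (normOneModulus s).2.2 * x ^ 2 := by
    simp only [normOneModulus, map_sub, map_one]
    linear_combination -(hs x)
  have hinj : Function.Injective (eval ι x) :=
    eval_injective ι.injective hmod 30 (exists_pow_thirtyOne_eq_base s hirred)
  have hpow : ∀ {m}, eval ι x m ^ 31 = 1 → pow (normOneModulus s) m 31 = (1, 0, 0) :=
    fun h => hinj (by rw [eval_pow hmod, h, eval_base, map_one])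
  obtain ⟨n, rfl⟩ := ((Fintype.bijective_iff_injective_and_card _).mpr ⟨hinj, by simp [hcard]⟩).2 y
  have h₁ : eval ι x (1, 0, 0) = 1 := by rw [eval_base, map_one]
  have ht : eval ι x (0, 1, 0) = x := by simp [CubicExt.eval]
  intro hyx
  refine pow_thirtyOne_sub_t_ne_one s hirred n (hpow hy) (hpow ?_) (hpow ?_)
  · rwa [eval_sub, h₁]
  · rwa [eval_sub, ht]

end CharFive

theorem stmt_7 {F : Type} [Field F] [Fintype F] (hcard : Fintype.card F = 125) :
    ¬ ∃ a : Fin 4 → F, Function.Injective a ∧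
        ∀ i j : Fin 4, i < j → ∃ c : F, c ≠ 0 ∧ a j - a i = c ^ 4 := by
  rintro ⟨a, -, ha⟩
  have : CharP F 5 := charP_of_card_eq_prime_pow (f := 3) hcard
  have hH : ∀ i j : Fin 4, i < j → (a j - a i) ^ 31 = 1 := fun i j hij => by
    obtain ⟨c, hc, hcij⟩ := ha i j hij
    rw [hcij, ← pow_mul, ← FiniteField.pow_card_sub_one_eq_one c hc, hcard]
  have hd : a 1 - a 0 ≠ 0 := fun h => by simpa [h] using hH 0 1 (by decide)
  have hquot : ∀ i j : Fin 4, i < j → ((a j - a i) / (a 1 - a 0)) ^ 31 = 1 := fun i j hij => by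
    rw [div_pow, hH i j hij, hH 0 1 (by decide), div_one]
  refine sub_pow_thirtyOne_ne_one hcard (hquot 0 2 (by decide)) ?_ (hquot 0 3 (by decide)) ?_ ?_
  · rw [div_sub_one hd, sub_sub_sub_cancel_right]
    exact hquot 1 2 (by decide)
  · rw [div_sub_one hd, sub_sub_sub_cancel_right]
    exact hquot 1 3 (by decide)
  · rw [div_sub_div_same, sub_sub_sub_cancel_right]
    exact hquot 2 3 (by decide)
end

section
/- There exists a tournament T on a vertex set of 125 elements (i.e., a complete asymmetric loopless digraph) together with a 2-coloring of its edges such that no four vertices carry a monochromatic transitive subtournament of order 4; that is, there exist no distinct vertices a_1, a_2, a_3, a_4 and no color i such that a_r → a_s is an edge of color i for all 1 ≤ r < s ≤ 4. (Consequently 126 ≤ R_2(4), the 2-color directed Ramsey number.) -/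
set_option maxRecDepth 100000
set_option maxHeartbeats 2000000

abbrev Gx := ZMod 5 × ZMod 5 × ZMod 5

def gx : Fin 125 → Gx :=
  fun x => ((x.val : ZMod 5), ((x.val / 5 : ℕ) : ZMod 5), ((x.val / 25 : ℕ) : ZMod 5))

def egx : Gx → Fin 125 :=
  fun p => ⟨p.1.val + 5 * p.2.1.val + 25 * p.2.2.val, by
    have h1 := p.1.val_lt
    have h2 := p.2.1.val_lt
    have h3 := p.2.2.val_lt
    omega⟩

def addc : Fin 125 → Fin 125 → Fin 125 :=
  fun x y => ⟨(x.val % 5 + y.val % 5) % 5 + 5 * ((x.val / 5 % 5 + y.val / 5 % 5) % 5)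
      + 25 * ((x.val / 25 + y.val / 25) % 5), by omega⟩

def C0 : List (Fin 125) :=
  [1, 6, 13, 20, 22, 23, 25, 26, 34, 35, 36, 40, 46, 47, 49, 53, 56, 73, 76, 79, 81, 84, 85, 93, 94, 107, 111, 113, 114, 120, 123]

def C1 : List (Fin 125) :=
  [3, 9, 10, 11, 14, 18, 29, 39, 43, 57, 58, 59, 60, 64, 66, 75, 78, 80, 83, 86, 87, 88, 92, 95, 102, 103, 105, 117, 118, 122, 124]

def m0 : Nat := 11996964180693245148501300440552448066
def m1 : Nat := 27083076235862731571128534287889223176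

lemma gx_inj : ∀ a b : Fin 125, gx a = gx b → a = b := by
  intro a b h
  have h1 : (a.val : ZMod 5) = (b.val : ZMod 5) := congrArg Prod.fst h
  have h2 : ((a.val / 5 : ℕ) : ZMod 5) = ((b.val / 5 : ℕ) : ZMod 5) :=
    congrArg (fun p => p.2.1) h
  have h3 : ((a.val / 25 : ℕ) : ZMod 5) = ((b.val / 25 : ℕ) : ZMod 5) :=
    congrArg (fun p => p.2.2) h
  have e1 : a.val % 5 = b.val % 5 := (ZMod.natCast_eq_natCast_iff _ _ _).mp h1
  have e2 : a.val / 5 % 5 = b.val / 5 % 5 := (ZMod.natCast_eq_natCast_iff _ _ _).mp h2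
  have e3 : a.val / 25 % 5 = b.val / 25 % 5 := (ZMod.natCast_eq_natCast_iff _ _ _).mp h3
  have la := a.isLt
  have lb := b.isLt
  exact Fin.ext (by omega)

lemma hadd : ∀ p q : Gx, egx (p + q) = addc (egx p) (egx q) := by
  rintro ⟨x1, x2, x3⟩ ⟨y1, y2, y3⟩
  have b1 := x1.val_lt
  have b2 := x2.val_lt
  have b3 := x3.val_lt
  have c1 := y1.val_lt
  have c2 := y2.val_lt
  have c3 := y3.val_lt
  apply Fin.ext
  show (x1 + y1).val + 5 * (x2 + y2).val + 25 * (x3 + y3).val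
      = ((x1.val + 5 * x2.val + 25 * x3.val) % 5 + (y1.val + 5 * y2.val + 25 * y3.val) % 5) % 5
        + 5 * (((x1.val + 5 * x2.val + 25 * x3.val) / 5 % 5
            + (y1.val + 5 * y2.val + 25 * y3.val) / 5 % 5) % 5)
        + 25 * (((x1.val + 5 * x2.val + 25 * x3.val) / 25
            + (y1.val + 5 * y2.val + 25 * y3.val) / 25) % 5)
  rw [ZMod.val_add, ZMod.val_add, ZMod.val_add,
    show (x1.val + 5 * x2.val + 25 * x3.val) % 5 = x1.val by omega,
    show (y1.val + 5 * y2.val + 25 * y3.val) % 5 = y1.val by omega,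
    show (x1.val + 5 * x2.val + 25 * x3.val) / 5 % 5 = x2.val by omega,
    show (y1.val + 5 * y2.val + 25 * y3.val) / 5 % 5 = y2.val by omega,
    show (x1.val + 5 * x2.val + 25 * x3.val) / 25 = x3.val by omega,
    show (y1.val + 5 * y2.val + 25 * y3.val) / 25 = y3.val by omega]

lemma zero_not : egx (0 : Gx) ∉ C0 ∧ egx (0 : Gx) ∉ C1 := by decide

lemma asymm_mem : ∀ d : Gx, d ≠ 0 →
    ((egx d ∈ C0 ∨ egx d ∈ C1) ↔ ¬ (egx (-d) ∈ C0 ∨ egx (-d) ∈ C1)) := by decide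

lemma mem_iff0 : ∀ x : Fin 125, x ∈ C0 ↔ m0.testBit x.val = true := by decide

lemma mem_iff1 : ∀ x : Fin 125, x ∈ C1 ↔ m1.testBit x.val = true := by decide

lemma bad0 : ∀ a ∈ C0, ∀ b ∈ C0, ∀ c ∈ C0,
    ¬ (m0.testBit (addc a b).val = true ∧ m0.testBit (addc b c).val = true
        ∧ m0.testBit (addc (addc a b) c).val = true) := by decide

lemma bad1 : ∀ a ∈ C1, ∀ b ∈ C1, ∀ c ∈ C1,
    ¬ (m1.testBit (addc a b).val = true ∧ m1.testBit (addc b c).val = true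
        ∧ m1.testBit (addc (addc a b) c).val = true) := by decide

theorem stmt_8 :
    ∃ (edge : Fin 125 → Fin 125 → Prop) (color : Fin 125 → Fin 125 → Fin 2),
      (∀ a, ¬ edge a a) ∧
      (∀ a b, a ≠ b → (edge a b ↔ ¬ edge b a)) ∧
      ¬ ∃ (f : Fin 4 → Fin 125) (i : Fin 2), Function.Injective f ∧
          ∀ r s : Fin 4, r < s → edge (f r) (f s) ∧ color (f r) (f s) = i := by
  refine ⟨fun a b => egx (gx b - gx a) ∈ C0 ∨ egx (gx b - gx a) ∈ C1,
         fun a b => if egx (gx b - gx a) ∈ C0 then 0 else 1, ?_, ?_, ?_⟩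
  · intro a h
    rw [sub_self] at h
    exact h.elim zero_not.1 zero_not.2
  · intro a b hab
    have hd : gx b - gx a ≠ 0 := by
      intro h
      exact hab ((gx_inj b a (sub_eq_zero.mp h)).symm)
    have := asymm_mem _ hd
    rwa [neg_sub] at this
  · rintro ⟨f, i, -, h⟩
    have e12 : gx (f 2) - gx (f 0) = (gx (f 1) - gx (f 0)) + (gx (f 2) - gx (f 1)) := by ring
    have e23 : gx (f 3) - gx (f 1) = (gx (f 2) - gx (f 1)) + (gx (f 3) - gx (f 2)) := by ring
    have e123 : gx (f 3) - gx (f 0) =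
        ((gx (f 1) - gx (f 0)) + (gx (f 2) - gx (f 1))) + (gx (f 3) - gx (f 2)) := by ring
    fin_cases i
    · have key : ∀ r s : Fin 4, r < s → egx (gx (f s) - gx (f r)) ∈ C0 := by
        intro r s hrs
        obtain ⟨he, hc⟩ := h r s hrs
        simp only at hc
        by_contra hm
        rw [if_neg hm] at hc
        exact absurd hc (by decide)
      have m02 := key 0 2 (by decide)
      have m13 := key 1 3 (by decide)
      have m03 := key 0 3 (by decide)
      rw [e12, hadd] at m02
      rw [e23, hadd] at m13
      rw [e123, hadd, hadd] at m03
      exact bad0 _ (key 0 1 (by decide)) _ (key 1 2 (by decide)) _ (key 2 3 (by decide))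
        ⟨(mem_iff0 _).mp m02, (mem_iff0 _).mp m13, (mem_iff0 _).mp m03⟩
    · have key : ∀ r s : Fin 4, r < s → egx (gx (f s) - gx (f r)) ∈ C1 := by
        intro r s hrs
        obtain ⟨he, hc⟩ := h r s hrs
        simp only at hc
        by_cases hm : egx (gx (f s) - gx (f r)) ∈ C0
        · rw [if_pos hm] at hc
          exact absurd hc (by decide)
        · exact he.resolve_left hm
      have m02 := key 0 2 (by decide)
      have m13 := key 1 3 (by decide)
      have m03 := key 0 3 (by decide)
      rw [e12, hadd] at m02
      rw [e23, hadd] at m13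
      rw [e123, hadd, hadd] at m03
      exact bad1 _ (key 0 1 (by decide)) _ (key 1 2 (by decide)) _ (key 2 3 (by decide))
        ⟨(mem_iff1 _).mp m02, (mem_iff1 _).mp m13, (mem_iff1 _).mp m03⟩
end

section
/- For every integer t ≥ 2, there exists a tournament on a vertex set of 125 · 7^{t−2} elements together with a t-coloring of its edges such that no four vertices carry a monochromatic transitive subtournament of order 4; that is, there exist no distinct vertices a_1, a_2, a_3, a_4 and no color i such that a_r → a_s is an edge of color i for all 1 ≤ r < s ≤ 4. (Consequently 125 · 7^{t−2} + 1 ≤ R_t(4) for all t ≥ 2.) -/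
/-!
The construction is a lexicographic product. If `T₁` is an `s`-coloured and `T₂` a `t`-coloured
tournament, neither with a monochromatic transitive subtournament of order `m`, blow up every vertex
of `T₁` into a copy of `T₂`: edges inside a copy keep their `T₂`-colour, edges between copies
follow `T₁` with its colours shifted past those of `T₂`. A monochromatic `TT_m` then lies inside a
single copy or meets every copy at most once, so it is one in `T₂` or in `T₁`.

The factors are Cayley tournaments `x → y ↔ y - x ∈ D`, for which a monochromatic `TT₄` can be
translated to start at `0`: the Paley tournament on `ZMod 7` (`D` the nonzero squares, one colour)
and a `2`-coloured tournament on `(ZMod 5)³` given by its two colour classes. Starting from the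
latter and multiplying by the Paley tournament `t - 2` times gives the theorem.
-/

def HasMonoTTFreeColoredTournament (α : Type*) (m t : ℕ) : Prop :=
  ∃ (edge : α → α → Prop) (color : α → α → Fin t),
    (∀ a, ¬ edge a a) ∧
    (∀ a b, a ≠ b → (edge a b ↔ ¬ edge b a)) ∧
    ¬ ∃ (f : Fin m → α) (i : Fin t), Function.Injective f ∧
        ∀ r s : Fin m, r < s → edge (f r) (f s) ∧ color (f r) (f s) = i

/-- In the Cayley tournament `x → y ↔ S (y - x)`, the vertices `0, b, c, d` span the transitive
tournament `0 → b → c → d` exactly when these six elements satisfy `S`. -/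
def TT4DiffFree {G : Type*} [AddGroup G] (S : G → Prop) : Prop :=
  ∀ b, S b → ∀ c, S c → ∀ d, S d → S (c - b) → S (d - b) → S (d - c) → False

namespace HasMonoTTFreeColoredTournament

variable {α β : Type*} {m s t : ℕ}

theorem of_equiv (e : α ≃ β) (h : HasMonoTTFreeColoredTournament α m t) :
    HasMonoTTFreeColoredTournament β m t := by
  obtain ⟨edge, color, hirrefl, htourn, hfree⟩ := h
  refine ⟨fun x y => edge (e.symm x) (e.symm y), fun x y => color (e.symm x) (e.symm y),
    fun a => hirrefl _, fun a b hab => htourn _ _ (e.symm.injective.ne hab), ?_⟩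
  rintro ⟨f, i, hf, hmono⟩
  exact hfree ⟨e.symm ∘ f, i, e.symm.injective.comp hf, hmono⟩

theorem prod (hα : HasMonoTTFreeColoredTournament α m s)
    (hβ : HasMonoTTFreeColoredTournament β m t) :
    HasMonoTTFreeColoredTournament (α × β) m (t + s) := by
  classical
  obtain ⟨eα, cα, hα₁, hα₂, hα₃⟩ := hα
  obtain ⟨eβ, cβ, hβ₁, hβ₂, hβ₃⟩ := hβ
  refine ⟨fun p q => if p.1 = q.1 then eβ p.2 q.2 else eα p.1 q.1,
    fun p q => if p.1 = q.1 then Fin.castAdd s (cβ p.2 q.2) else Fin.natAdd t (cα p.1 q.1),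
    fun p => by simpa using hβ₁ p.2, ?_, ?_⟩
  · rintro ⟨u, x⟩ ⟨v, y⟩ hne
    by_cases huv : u = v
    · subst huv
      simpa using hβ₂ x y (by simpa using hne)
    · simpa [huv, Ne.symm huv] using hα₂ u v huv
  · have castAdd_ne_natAdd (j : Fin t) (k : Fin s) : Fin.castAdd s j ≠ Fin.natAdd t k := by
      simp only [ne_eq, Fin.ext_iff, Fin.val_castAdd, Fin.val_natAdd]; omega
    rintro ⟨f, i, hf, hmono⟩
    beta_reduce at hmono
    induction i using Fin.addCases with
    | left j =>
      have hsame : ∀ a b, a < b → (f a).1 = (f b).1 := fun a b hab => by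
        by_contra hne
        have hcol := (hmono a b hab).2
        rw [if_neg hne] at hcol
        exact castAdd_ne_natAdd j _ hcol.symm
      refine hβ₃ ⟨fun r => (f r).2, j,
        Function.injective_iff_pairwise_ne.2 (Pairwise.of_lt ?_), ?_⟩
      · exact fun a b hab h => hf.ne hab.ne (Prod.ext (hsame a b hab) h)
      · intro a b hab
        simpa [hsame a b hab] using hmono a b hab
    | right j =>
      have hdiff : ∀ a b, a < b → (f a).1 ≠ (f b).1 := fun a b hab hsame => by
        have hcol := (hmono a b hab).2
        rw [if_pos hsame] at hcol
        exact castAdd_ne_natAdd _ j hcol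
      refine hα₃ ⟨fun r => (f r).1, j,
        Function.injective_iff_pairwise_ne.2 (Pairwise.of_lt hdiff), ?_⟩
      intro a b hab
      simpa [hdiff a b hab] using hmono a b hab

theorem of_cayley {G : Type*} [AddGroup G] (D : G → Prop) (col : G → Fin t) (hD₀ : ¬ D 0)
    (hD : ∀ d, d ≠ 0 → (D d ↔ ¬ D (-d))) (hfree : ∀ i, TT4DiffFree fun x => D x ∧ col x = i) :
    HasMonoTTFreeColoredTournament G 4 t := by
  refine ⟨fun x y => D (y - x), fun x y => col (y - x), fun a => by simpa using hD₀,
    fun a b hab => by simpa using hD (b - a) (sub_ne_zero.2 hab.symm), ?_⟩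
  rintro ⟨f, i, -, hmono⟩
  have hmem : ∀ a b : Fin 4, a < b → D (f b - f a) ∧ col (f b - f a) = i := hmono
  refine hfree i _ (hmem 0 1 (by decide)) _ (hmem 0 2 (by decide)) _ (hmem 0 3 (by decide))
    ?_ ?_ ?_ <;> rw [sub_sub_sub_cancel_right] <;> exact hmem _ _ (by decide)

theorem paley_zmod7 : HasMonoTTFreeColoredTournament (ZMod 7) 4 1 := by
  refine of_cayley (fun x => x ≠ 0 ∧ IsSquare x) (fun _ => 0) (by decide) (by decide) fun i => ?_
  obtain rfl := Subsingleton.elim i 0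
  simp only [and_true]
  dsimp only [TT4DiffFree]
  decide

end HasMonoTTFreeColoredTournament

abbrev Z5Cube : Type := ZMod 5 × ZMod 5 × ZMod 5

def cubeClass : Fin 2 → List Z5Cube := ![
  [(0,0,1), (0,2,1), (0,2,3), (0,3,1), (0,4,0), (0,4,4), (1,0,0), (1,0,1), (1,0,3), (1,1,0),
    (1,1,2), (1,1,3), (1,2,1), (1,2,4), (1,4,1), (2,1,4), (2,4,0), (2,4,1), (3,0,2), (3,2,0),
    (3,2,4), (3,3,3), (3,4,0), (3,4,2), (3,4,4), (4,0,3), (4,1,1), (4,1,3), (4,2,4), (4,3,3),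
    (4,4,1)],
  [(0,0,2), (0,1,2), (0,3,0), (0,3,3), (0,4,1), (0,4,2), (1,0,4), (1,1,1), (1,3,0), (1,3,3),
    (1,3,4), (1,4,0), (1,4,3), (2,0,0), (2,0,1), (2,0,2), (2,2,0), (2,2,1), (2,2,4), (2,3,2),
    (2,4,2), (2,4,3), (3,0,1), (3,1,1), (3,2,1), (3,2,2), (3,3,2), (3,4,3), (4,2,3), (4,3,0),
    (4,3,2)]]

def cubeConnection (x : Z5Cube) : Prop := ∃ i, x ∈ cubeClass i

def cubeColor (x : Z5Cube) : Fin 2 := if x ∈ cubeClass 0 then 0 else 1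

theorem not_cubeConnection_zero : ¬ cubeConnection 0 := by
  unfold cubeConnection
  decide

set_option maxRecDepth 100000 in
theorem cubeConnection_iff_not_neg : ∀ d : Z5Cube, d ≠ 0 →
    (cubeConnection d ↔ ¬ cubeConnection (-d)) := by
  unfold cubeConnection
  decide

set_option maxRecDepth 100000 in
theorem mem_cubeClass_iff : ∀ (i : Fin 2) (x : Z5Cube),
    x ∈ cubeClass i ↔ cubeConnection x ∧ cubeColor x = i := by
  unfold cubeConnection cubeColor
  decide

set_option maxRecDepth 100000 in
set_option maxHeartbeats 1000000 in
theorem cubeClass_tt4DiffFree (i : Fin 2) : TT4DiffFree (· ∈ cubeClass i) := by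
  revert i
  dsimp only [TT4DiffFree]
  decide

theorem HasMonoTTFreeColoredTournament.z5Cube : HasMonoTTFreeColoredTournament Z5Cube 4 2 := by
  refine of_cayley cubeConnection cubeColor not_cubeConnection_zero cubeConnection_iff_not_neg
    fun i => ?_
  simpa only [← mem_cubeClass_iff] using cubeClass_tt4DiffFree i

namespace HasMonoTTFreeColoredTournament

theorem fin_125_mul_7_pow (k : ℕ) :
    HasMonoTTFreeColoredTournament (Fin (125 * 7 ^ k)) 4 (k + 2) := by
  induction k with
  | zero => exact z5Cube.of_equiv (Fintype.equivFinOfCardEq rfl)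
  | succ k ih =>
    have hcard : Fintype.card (ZMod 7 × Fin (125 * 7 ^ k)) = 125 * 7 ^ (k + 1) := by
      simp only [Fintype.card_prod, Fintype.card_fin, ZMod.card]
      ring
    exact (paley_zmod7.prod ih).of_equiv (Fintype.equivFinOfCardEq hcard)

end HasMonoTTFreeColoredTournament

theorem stmt_9 (t : ℕ) (ht : 2 ≤ t) :
    ∃ (edge : Fin (125 * 7 ^ (t - 2)) → Fin (125 * 7 ^ (t - 2)) → Prop)
      (color : Fin (125 * 7 ^ (t - 2)) → Fin (125 * 7 ^ (t - 2)) → Fin t),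
      (∀ a, ¬ edge a a) ∧
      (∀ a b, a ≠ b → (edge a b ↔ ¬ edge b a)) ∧
      ¬ ∃ (f : Fin 4 → Fin (125 * 7 ^ (t - 2))) (i : Fin t), Function.Injective f ∧
          ∀ r s : Fin 4, r < s → edge (f r) (f s) ∧ color (f r) (f s) = i := by
  obtain ⟨k, rfl⟩ := Nat.exists_eq_add_of_le' ht
  rw [Nat.add_sub_cancel]
  exact HasMonoTTFreeColoredTournament.fin_125_mul_7_pow k
end

section
/- Let F be the finite field with 43 elements. The 6th power Paley digraph G_6(43), with vertex set F and an edge a → b if and only if b − a is a nonzero 6th power in F, contains no transitive subtournament of order 3; that is, there are no three distinct elements a, b, c of F such that b − a, c − b and c − a are all nonzero 6th powers. -/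
set_option maxRecDepth 10000
lemma zmod43_key : ∀ x y : ZMod 43, (∃ c : ZMod 43, c ≠ 0 ∧ x = c ^ 6) →
    (∃ c : ZMod 43, c ≠ 0 ∧ y = c ^ 6) → ¬ ∃ c : ZMod 43, c ≠ 0 ∧ x + y = c ^ 6 := by decide

theorem stmt_10 {F : Type} [Field F] [Fintype F] (hcard : Fintype.card F = 43) :
    ¬ ∃ a : Fin 3 → F, Function.Injective a ∧
        ∀ i j : Fin 3, i < j → ∃ c : F, c ≠ 0 ∧ a j - a i = c ^ 6 := by
  rintro ⟨a, -, h⟩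
  have hp : Nat.Prime 43 := by norm_num
  let e : ZMod 43 ≃+* F := ZMod.ringEquivOfPrime F hp hcard
  obtain ⟨c1, hc1, h1⟩ := h 0 1 (by decide)
  obtain ⟨c2, hc2, h2⟩ := h 1 2 (by decide)
  obtain ⟨c3, hc3, h3⟩ := h 0 2 (by decide)
  refine zmod43_key (e.symm (a 1 - a 0)) (e.symm (a 2 - a 1))
    ⟨e.symm c1, by simp [hc1], by rw [h1, map_pow]⟩
    ⟨e.symm c2, by simp [hc2], by rw [h2, map_pow]⟩
    ⟨e.symm c3, by simp [hc3], ?_⟩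
  rw [← map_add, ← map_pow, ← h3]
  ring_nf
end

section
/- For every integer t ≥ 3, there exists a tournament on a vertex set of 43 · 3^{t−3} elements together with a t-coloring of its edges such that no three vertices carry a monochromatic transitive subtournament of order 3; that is, there exist no distinct vertices a_1, a_2, a_3 and no color i such that a_r → a_s is an edge of color i for all 1 ≤ r < s ≤ 3. (Consequently 43 · 3^{t−3} + 1 ≤ R_t(3) for all t ≥ 3.) -/
def Good (V : Type) (t : ℕ) : Prop :=
  ∃ (edge : V → V → Prop) (color : V → V → Fin t),
    (∀ a, ¬ edge a a) ∧
    (∀ a b, a ≠ b → (edge a b ↔ ¬ edge b a)) ∧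
    ¬ ∃ (f : Fin 3 → V) (i : Fin t), Function.Injective f ∧
        ∀ r s : Fin 3, r < s → edge (f r) (f s) ∧ color (f r) (f s) = i

lemma good_equiv {V W : Type} {t : ℕ} (e : V ≃ W) (h : Good V t) : Good W t := by
  obtain ⟨edge, color, h1, h2, h3⟩ := h
  refine ⟨fun a b => edge (e.symm a) (e.symm b), fun a b => color (e.symm a) (e.symm b),
    fun a => h1 _, fun a b hab => h2 _ _ (fun hc => hab (by simpa using congrArg e hc)), ?_⟩
  rintro ⟨f, i, hf, hfe⟩
  exact h3 ⟨fun r => e.symm (f r), i, fun r s hrs => hf (by simpa using congrArg e hrs),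
    fun r s hrs => hfe r s hrs⟩

def L1 : List (ZMod 43) := [5,11,13,19,25,39,42]
def L2 : List (ZMod 43) := [3,9,10,21,28,29,41]
def L3 : List (ZMod 43) := [8,12,23,26,27,36,37]
def L : List (ZMod 43) := L1 ++ L2 ++ L3
def col (d : ZMod 43) : Fin 3 := if d ∈ L1 then 0 else if d ∈ L2 then 1 else 2

lemma base : Good (ZMod 43) 3 := by
  have hasym : ∀ d : ZMod 43, d ≠ 0 → (d ∈ L ↔ ¬ (-d ∈ L)) := by decide
  have hsum : ∀ x y : ZMod 43, x ∈ L → y ∈ L → x + y ∈ L →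
      col x = col y → col (x + y) ≠ col x := by decide
  refine ⟨fun a b => (b - a) ∈ L, fun a b => col (b - a), ?_, ?_, ?_⟩
  · intro a; simp only [sub_self]; decide
  · intro a b hab
    have := hasym (b - a) (sub_ne_zero.mpr (Ne.symm hab))
    rwa [neg_sub] at this
  · rintro ⟨f, i, hf, hfe⟩
    obtain ⟨e01, c01⟩ := hfe 0 1 (by decide)
    obtain ⟨e12, c12⟩ := hfe 1 2 (by decide)
    obtain ⟨e02, c02⟩ := hfe 0 2 (by decide)
    simp only [] at e01 c01 e12 c12 e02 c02
    have key : f 1 - f 0 + (f 2 - f 1) = f 2 - f 0 := by ring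
    exact hsum _ _ e01 e12 (key ▸ e02) (c01.trans c12.symm) (by rw [key, c02, c01])

lemma step {V : Type} {t : ℕ} (h : Good V t) : Good (V × ZMod 3) (t + 1) := by
  classical
  obtain ⟨edge, color, h1, h2, h3⟩ := h
  refine ⟨fun p q => if p.1 = q.1 then q.2 = p.2 + 1 else edge p.1 q.1,
    fun p q => if p.1 = q.1 then Fin.last t else (color p.1 q.1).castSucc, ?_, ?_, ?_⟩
  · intro a; simp only [if_pos rfl]
    exact fun hc => (by decide : ∀ x : ZMod 3, x ≠ x + 1) a.2 hc
  · rintro ⟨x, a⟩ ⟨y, b⟩ hab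
    by_cases hxy : x = y
    · subst hxy
      have hab' : a ≠ b := fun hc => hab (by rw [hc])
      simp only [if_pos rfl]
      revert hab'
      exact (by decide : ∀ a b : ZMod 3, a ≠ b → (b = a + 1 ↔ ¬ a = b + 1)) a b
    · simp only [if_neg hxy, if_neg (Ne.symm hxy)]
      exact h2 x y hxy
  · rintro ⟨f, i, hf, hfe⟩
    obtain ⟨e01, c01⟩ := hfe 0 1 (by decide)
    obtain ⟨e12, c12⟩ := hfe 1 2 (by decide)
    obtain ⟨e02, c02⟩ := hfe 0 2 (by decide)
    simp only [] at e01 c01 e12 c12 e02 c02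
    by_cases hi : i = Fin.last t
    · subst hi
      have same : ∀ r s : Fin 3, r < s → (f r).1 = (f s).1 := by
        intro r s hrs
        obtain ⟨_, cc⟩ := hfe r s hrs
        simp only [] at cc
        by_contra hc
        rw [if_neg hc] at cc
        exact (Fin.castSucc_lt_last _).ne cc
      have s01 := same 0 1 (by decide)
      have s12 := same 1 2 (by decide)
      have s02 := same 0 2 (by decide)
      rw [if_pos s01] at e01; rw [if_pos s12] at e12; rw [if_pos s02] at e02
      rw [e01] at e12; rw [e02] at e12
      exact (by decide : ∀ x : ZMod 3, x + 1 ≠ x + 1 + 1) (f 0).2 e12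
    · obtain ⟨j, rfl⟩ := Fin.exists_castSucc_eq.mpr hi
      have diff : ∀ r s : Fin 3, r < s → (f r).1 ≠ (f s).1 := by
        intro r s hrs
        obtain ⟨_, cc⟩ := hfe r s hrs
        simp only [] at cc
        by_contra hc
        rw [if_pos hc] at cc
        exact (Fin.castSucc_lt_last _).ne cc.symm
      refine h3 ⟨fun r => (f r).1, j, ?_, ?_⟩
      · intro r s hrs
        by_contra hne
        rcases lt_trichotomy r s with h' | h' | h'
        · exact diff r s h' hrs
        · exact hne h'
        · exact diff s r h' hrs.symm
      · intro r s hrs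
        obtain ⟨ee, cc⟩ := hfe r s hrs
        simp only [] at ee cc
        have hne := diff r s hrs
        rw [if_neg hne] at ee cc
        exact ⟨ee, Fin.castSucc_injective _ cc⟩

lemma main : ∀ k : ℕ, Good (Fin (43 * 3 ^ k)) (3 + k) := by
  intro k
  induction k with
  | zero =>
      have e : ZMod 43 ≃ Fin (43 * 3 ^ 0) := finCongr (by norm_num)
      exact good_equiv e base
  | succ k ih =>
      have h := step ih
      have e : Fin (43 * 3 ^ k) × ZMod 3 ≃ Fin (43 * 3 ^ (k + 1)) :=
        finProdFinEquiv.trans (finCongr (by rw [pow_succ, mul_assoc]))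
      exact good_equiv e h

theorem stmt_11 (t : ℕ) (ht : 3 ≤ t) :
    ∃ (edge : Fin (43 * 3 ^ (t - 3)) → Fin (43 * 3 ^ (t - 3)) → Prop)
      (color : Fin (43 * 3 ^ (t - 3)) → Fin (43 * 3 ^ (t - 3)) → Fin t),
      (∀ a, ¬ edge a a) ∧
      (∀ a b, a ≠ b → (edge a b ↔ ¬ edge b a)) ∧
      ¬ ∃ (f : Fin 3 → Fin (43 * 3 ^ (t - 3))) (i : Fin t), Function.Injective f ∧
          ∀ r s : Fin 3, r < s → edge (f r) (f s) ∧ color (f r) (f s) = i := by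
  obtain ⟨k, rfl⟩ : ∃ k, t = 3 + k := ⟨t - 3, by omega⟩
  have h3k : 3 + k - 3 = k := by omega
  rw [h3k]
  exact main k
end

section
/- Let k ≥ 2 be an even integer, q a prime power with q ≡ k+1 (mod 2k), and χ_k a multiplicative character of F_q of order k. Then Σ_{s=0}^{k−1} Σ_{t=0}^{k−1} Σ_{v=0}^{k−1} J(χ_k^s, χ_k^t) · J(χ_k^{−s}, χ_k^v) = S_k(q) − 4·R_k(q) + q^2 + q(k^2 − 5k) + k^2 + 4k − 3. -/
/-- `R⁻_k(q)`: as `R_k(q)` but with each term multiplied by `(-1)^{s+t}`. -/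
noncomputable def Rmk {F : Type} [Field F] [Fintype F] (k : ℕ) (χ : MulChar F ℂ) : ℂ :=
  ∑ s ∈ Finset.Icc 1 (k - 1), ∑ t ∈ Finset.Icc 1 (k - 1),
    if (s : ZMod k) + t ≠ 0 then (-1 : ℂ) ^ (s + t) * jac (χ ^ s) (χ ^ t) else 0

/-- `S_k(q) = ∑_{1 ≤ s,t,v ≤ k-1, s+t,v+t,v-s ≢ 0 (k)} J(χ^s, χ^t) J(χ^{-s}, χ^v)`. -/
noncomputable def Sk {F : Type} [Field F] [Fintype F] (k : ℕ) (χ : MulChar F ℂ) : ℂ :=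
  ∑ s ∈ Finset.Icc 1 (k - 1), ∑ t ∈ Finset.Icc 1 (k - 1), ∑ v ∈ Finset.Icc 1 (k - 1),
    if (s : ZMod k) + t ≠ 0 ∧ (v : ZMod k) + t ≠ 0 ∧ (v : ZMod k) - s ≠ 0 then
      jac (χ ^ s) (χ ^ t) * jac (χ⁻¹ ^ s) (χ ^ v) else 0

/-- `S⁻_k(q)`: as `S_k(q)` but with each term multiplied by `(-1)^{s+t}`. -/
noncomputable def Smk {F : Type} [Field F] [Fintype F] (k : ℕ) (χ : MulChar F ℂ) : ℂ :=
  ∑ s ∈ Finset.Icc 1 (k - 1), ∑ t ∈ Finset.Icc 1 (k - 1), ∑ v ∈ Finset.Icc 1 (k - 1),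
    if (s : ZMod k) + t ≠ 0 ∧ (v : ZMod k) + t ≠ 0 ∧ (v : ZMod k) - s ≠ 0 then
      (-1 : ℂ) ^ (s + t) * (jac (χ ^ s) (χ ^ t) * jac (χ⁻¹ ^ s) (χ ^ v)) else 0

lemma IsPrimitiveRoot.pow_eq_neg_one {R : Type*} [CommRing R] [IsDomain R] {ζ : R} {j : ℕ}
    (h : IsPrimitiveRoot ζ (2 * j)) (hj : j ≠ 0) : ζ ^ j = -1 := by
  have h2 := h.pow_of_dvd hj (dvd_mul_left j 2)
  rw [Nat.mul_div_cancel _ (Nat.pos_of_ne_zero hj)] at h2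
  exact h2.eq_neg_one_of_two_right

lemma Nat.odd_sub_one_div_of_mod_two_mul {q k : ℕ} (hk : 0 < k) (h : q % (2 * k) = k + 1) :
    Odd ((q - 1) / k) := by
  refine ⟨q / (2 * k), Nat.div_eq_of_eq_mul_right hk ?_⟩
  have hq := Nat.div_add_mod q (2 * k)
  rw [h] at hq
  generalize q / (2 * k) = a at hq ⊢
  rw [← hq, ← add_assoc, Nat.add_sub_cancel]
  ring

namespace Finset

variable {G M : Type*} [Group G] [DecidableEq G] [AddCommMonoid M] {H : Finset G}

lemma inv_mem_erase_one (inv_mem : ∀ A ∈ H, A⁻¹ ∈ H) {A : G} (hA : A ∈ H.erase 1) :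
    A⁻¹ ∈ H.erase 1 := by
  rw [mem_erase] at hA ⊢
  exact ⟨inv_ne_one.mpr hA.1, inv_mem A hA.2⟩

lemma sum_erase_one_eq_add_sum_ite (inv_mem : ∀ A ∈ H, A⁻¹ ∈ H) {A : G} (hA : A ∈ H.erase 1)
    (f : G → M) :
    ∑ B ∈ H.erase 1, f B = f A⁻¹ + ∑ B ∈ H.erase 1, if A * B ≠ 1 then f B else 0 := by
  calc ∑ B ∈ H.erase 1, f B
      = ∑ B ∈ H.erase 1, ((if B = A⁻¹ then f B else 0) + if A * B ≠ 1 then f B else 0) := by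
        refine sum_congr rfl fun B _ => ?_
        rcases eq_or_ne B A⁻¹ with rfl | hB
        · simp
        · simp [hB, mul_eq_one_iff_eq_inv']
    _ = f A⁻¹ + ∑ B ∈ H.erase 1, if A * B ≠ 1 then f B else 0 := by
        rw [sum_add_distrib, sum_ite_eq', if_pos (inv_mem_erase_one inv_mem hA)]

lemma sum_erase_one_inv (inv_mem : ∀ A ∈ H, A⁻¹ ∈ H) (f : G → M) :
    ∑ A ∈ H.erase 1, f A⁻¹ = ∑ A ∈ H.erase 1, f A :=
  sum_nbij' (·⁻¹) (·⁻¹) (fun _ hA => inv_mem_erase_one inv_mem hA)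
    (fun _ hA => inv_mem_erase_one inv_mem hA) (fun A _ => inv_inv A) (fun A _ => inv_inv A)
    (fun _ _ => rfl)

lemma card_filter_mul_ne_one_add_two (one_mem : 1 ∈ H) (inv_mem : ∀ A ∈ H, A⁻¹ ∈ H) {A : G}
    (hA : A ∈ H.erase 1) : #{B ∈ H.erase 1 | A * B ≠ 1} + 2 = #H := by
  have h := sum_erase_one_eq_add_sum_ite inv_mem hA fun _ => 1
  rw [← sum_filter, sum_const, sum_const, card_erase_of_mem one_mem, smul_eq_mul, smul_eq_mul,
    mul_one, mul_one] at h
  have := card_pos.mpr ⟨1, one_mem⟩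
  omega

end Finset

namespace MulChar

lemma orderOf_apply_of_forall_mem_zpowers {R R' : Type*} [CommMonoid R] [CommMonoidWithZero R']
    (χ : MulChar R R') {g : Rˣ} (hg : ∀ x, x ∈ Subgroup.zpowers g) :
    orderOf (χ g) = orderOf χ :=
  orderOf_eq_orderOf_iff.mpr fun n => by rw [eq_iff hg, pow_apply_coe, one_apply_coe]

variable {F : Type} [Field F]

lemma apply_neg_one_mul_self (A : MulChar F ℂ) : A (-1) * A (-1) = 1 := by
  rw [← map_mul, neg_one_mul, neg_neg, map_one]

lemma inv_apply_neg_one (A : MulChar F ℂ) : A⁻¹ (-1) = A (-1) := by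
  rw [inv_apply', inv_neg_one]

variable [Fintype F]

lemma apply_neg_one_eq_neg_one {χ : MulChar F ℂ} (heven : Even (orderOf χ))
    (hodd : Odd ((Fintype.card F - 1) / orderOf χ)) : χ (-1) = -1 := by
  classical
  obtain ⟨g, hg⟩ := IsCyclic.exists_generator (α := Fˣ)
  obtain ⟨j, hj⟩ : ∃ j, orderOf χ = 2 * j := heven.exists_two_nsmul _
  have hj0 : j ≠ 0 := by have := χ.orderOf_pos; omega
  set m := (Fintype.card F - 1) / orderOf χ
  have hcard : Fintype.card F - 1 = 2 * (j * m) := by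
    rw [← mul_assoc, ← hj, Nat.mul_div_cancel' χ.orderOf_dvd_card_sub_one]
  have hg_root : IsPrimitiveRoot (g : F) (2 * (j * m)) := by
    rw [← hcard, ← Fintype.card_units, ← Nat.card_eq_fintype_card,
      ← orderOf_eq_card_of_forall_mem_zpowers hg, ← orderOf_units]
    exact IsPrimitiveRoot.orderOf _
  have hχg_root : IsPrimitiveRoot (χ g) (2 * j) := by
    rw [← hj, ← χ.orderOf_apply_of_forall_mem_zpowers hg]
    exact IsPrimitiveRoot.orderOf _
  have hm0 : j * m ≠ 0 := by have := hodd.pos; positivity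
  rw [← hg_root.pow_eq_neg_one hm0, map_pow, pow_mul, hχg_root.pow_eq_neg_one hj0,
    hodd.neg_one_pow]

end MulChar

section JacobiSum

variable {F : Type} [Field F] [Fintype F]

lemma jac_one_one : jac (1 : MulChar F ℂ) 1 = Fintype.card F - 2 := jacobiSum_one_one

lemma jac_one_left {B : MulChar F ℂ} (hB : B ≠ 1) : jac 1 B = -1 :=
  jacobiSum_one_nontrivial hB

lemma jac_one_right {A : MulChar F ℂ} (hA : A ≠ 1) : jac A 1 = -1 :=
  (jacobiSum_comm A 1).trans (jacobiSum_one_nontrivial hA)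

lemma jac_inv_right {A : MulChar F ℂ} (hA : A ≠ 1) : jac A A⁻¹ = -A (-1) :=
  jacobiSum_nontrivial_inv hA

lemma jac_mul_jac_inv {A B : MulChar F ℂ} (hA : A ≠ 1) (hB : B ≠ 1) (hAB : A * B ≠ 1) :
    jac A B * jac A⁻¹ B⁻¹ = Fintype.card F := by
  refine jacobiSum_mul_jacobiSum_inv ?_ hA hB hAB
  rw [ringChar.eq_zero]
  exact (CharP.ringChar_ne_zero_of_finite F).symm

lemma jac_eq_apply_neg_one_mul_jac (A B : MulChar F ℂ) :
    jac A B = A (-1) * jac A (A * B)⁻¹ := by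
  rw [show jac A B = jac B A from jacobiSum_comm A B,
    show jac A (A * B)⁻¹ = jac (A * B)⁻¹ A from jacobiSum_comm _ _, jac, jac,
    ← Equiv.sum_comp (Equiv.inv F), Finset.mul_sum]
  refine Finset.sum_congr rfl fun c _ => ?_
  rcases eq_or_ne c 0 with rfl | hc
  · simp [MulChar.map_zero]
  have h : 1 - c⁻¹ = -1 * c⁻¹ * (1 - c) := by field_simp; ring
  simp only [Equiv.inv_apply, h, map_mul, MulChar.inv_apply', MulChar.mul_apply]
  ring

lemma apply_neg_one_mul_jac (A B : MulChar F ℂ) : A (-1) * jac A B = jac A (A * B)⁻¹ := by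
  rw [jac_eq_apply_neg_one_mul_jac A B, ← mul_assoc, A.apply_neg_one_mul_self, one_mul]

end JacobiSum

section CharacterGroup

open Finset

variable {F : Type} [Field F] {H : Finset (MulChar F ℂ)}

lemma sum_apply_neg_one_eq_zero (mul_mem : ∀ A ∈ H, ∀ B ∈ H, A * B ∈ H)
    (inv_mem : ∀ A ∈ H, A⁻¹ ∈ H) {ψ : MulChar F ℂ} (hψ : ψ ∈ H) (hψ_neg : ψ (-1) = -1) :
    ∑ A ∈ H, A (-1) = 0 := by
  have hshift : ∑ A ∈ H, (ψ * A) (-1) = ∑ A ∈ H, A (-1) :=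
    sum_nbij' (ψ * ·) (ψ⁻¹ * ·) (fun A hA => mul_mem ψ hψ A hA)
      (fun A hA => mul_mem ψ⁻¹ (inv_mem ψ hψ) A hA) (fun A _ => inv_mul_cancel_left ψ A)
      (fun A _ => mul_inv_cancel_left ψ A) (fun _ _ => rfl)
  simp only [MulChar.mul_apply, hψ_neg, neg_one_mul, sum_neg_distrib] at hshift
  exact CharZero.neg_eq_self_iff.mp hshift

variable [Fintype F] [DecidableEq (MulChar F ℂ)]

noncomputable def jacRow (H : Finset (MulChar F ℂ)) (A : MulChar F ℂ) : ℂ :=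
  ∑ B ∈ H.erase 1, if A * B ≠ 1 then jac A B else 0

noncomputable def jacR (H : Finset (MulChar F ℂ)) : ℂ :=
  ∑ A ∈ H.erase 1, jacRow H A

noncomputable def jacS (H : Finset (MulChar F ℂ)) : ℂ :=
  ∑ A ∈ H.erase 1, ∑ B ∈ H.erase 1, ∑ C ∈ H.erase 1,
    if A * B ≠ 1 ∧ C * B ≠ 1 ∧ C ≠ A then jac A B * jac A⁻¹ C else 0

lemma apply_neg_one_mul_jacRow (mul_mem : ∀ A ∈ H, ∀ B ∈ H, A * B ∈ H)
    (inv_mem : ∀ A ∈ H, A⁻¹ ∈ H) {A : MulChar F ℂ} (hA : A ∈ H) :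
    A (-1) * jacRow H A = jacRow H A := by
  have hmaps : ∀ B ∈ (H.erase 1).filter (A * · ≠ 1),
      (A * B)⁻¹ ∈ (H.erase 1).filter (A * · ≠ 1) := by
    intro B hB
    simp only [mem_filter, mem_erase] at hB ⊢
    refine ⟨⟨inv_ne_one.mpr hB.2, inv_mem _ (mul_mem _ hA _ hB.1.2)⟩, ?_⟩
    rw [mul_inv, mul_inv_cancel_left]
    exact inv_ne_one.mpr hB.1.1
  have hinvol : ∀ B : MulChar F ℂ, (A * (A * B)⁻¹)⁻¹ = B := fun B => by
    rw [mul_inv A B, mul_inv_cancel_left, inv_inv]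
  rw [jacRow, ← sum_filter, mul_sum]
  exact sum_nbij' (fun B => (A * B)⁻¹) (fun B => (A * B)⁻¹) hmaps hmaps
    (fun B _ => hinvol B) (fun B _ => hinvol B) fun B _ => apply_neg_one_mul_jac A B

lemma sum_erase_one_jac (inv_mem : ∀ A ∈ H, A⁻¹ ∈ H) {A : MulChar F ℂ} (hA : A ∈ H.erase 1) :
    ∑ B ∈ H.erase 1, jac A B = jacRow H A - A (-1) := by
  rw [sum_erase_one_eq_add_sum_ite inv_mem hA, jac_inv_right (ne_of_mem_erase hA), jacRow]
  ring

lemma sum_jac_inv (one_mem : 1 ∈ H) (inv_mem : ∀ A ∈ H, A⁻¹ ∈ H) {A : MulChar F ℂ}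
    (hA : A ∈ H.erase 1) :
    ∑ C ∈ H, jac A⁻¹ C = -1 + jacRow H A⁻¹ - A (-1) := by
  have hA' := inv_mem_erase_one inv_mem hA
  rw [← add_sum_erase H _ one_mem, jac_one_right (ne_of_mem_erase hA'),
    sum_erase_one_jac inv_mem hA', A.inv_apply_neg_one]
  ring

lemma sum_jac_one_left (one_mem : 1 ∈ H) :
    ∑ B ∈ H, jac 1 B = Fintype.card F - 1 - #H := by
  rw [← add_sum_erase H _ one_mem, jac_one_one,
    sum_congr rfl fun B hB => jac_one_left (ne_of_mem_erase hB), sum_const,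
    card_erase_of_mem one_mem, nsmul_eq_mul,
    Nat.cast_sub (card_pos.mpr ⟨1, one_mem⟩)]
  ring

lemma sum_jac_inv_eq_of_mul_ne_one (one_mem : 1 ∈ H) (inv_mem : ∀ A ∈ H, A⁻¹ ∈ H)
    {A B : MulChar F ℂ} (hA : A ∈ H.erase 1) (hB : B ∈ H.erase 1) (hAB : A * B ≠ 1) :
    ∑ C ∈ H, jac A⁻¹ C = -1 + jac A⁻¹ B⁻¹ - A (-1) +
      ∑ C ∈ H.erase 1, if C * B ≠ 1 ∧ C ≠ A then jac A⁻¹ C else 0 := by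
  have hA' := inv_mem_erase_one inv_mem hA
  have hJ : jac A⁻¹ A = -A (-1) := by
    rw [← A.inv_apply_neg_one, ← jac_inv_right (ne_of_mem_erase hA'), inv_inv]
  rw [← add_sum_erase H _ one_mem, jac_one_right (ne_of_mem_erase hA'),
    sum_erase_one_eq_add_sum_ite inv_mem hB (jac A⁻¹),
    sum_erase_one_eq_add_sum_ite inv_mem hA' fun C => if B * C ≠ 1 then jac A⁻¹ C else 0,
    inv_inv, if_pos (by rwa [mul_comm]), hJ]
  have hcond : ∀ C : MulChar F ℂ, (if A⁻¹ * C ≠ 1 then if B * C ≠ 1 then jac A⁻¹ C else 0 else 0)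
      = if C * B ≠ 1 ∧ C ≠ A then jac A⁻¹ C else 0 := fun C => by
    rcases eq_or_ne C A with rfl | hCA
    · simp
    · simp [mul_comm B, inv_mul_eq_one, hCA, hCA.symm]
  simp only [hcond]
  ring

lemma sum_ite_jac_mul_sum_jac_inv (one_mem : 1 ∈ H) (mul_mem : ∀ A ∈ H, ∀ B ∈ H, A * B ∈ H)
    (inv_mem : ∀ A ∈ H, A⁻¹ ∈ H) {A : MulChar F ℂ} (hA : A ∈ H.erase 1) :
    ∑ B ∈ H.erase 1, (if A * B ≠ 1 then jac A B * ∑ C ∈ H, jac A⁻¹ C else 0) =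
      (∑ B ∈ H.erase 1, ∑ C ∈ H.erase 1,
        if A * B ≠ 1 ∧ C * B ≠ 1 ∧ C ≠ A then jac A B * jac A⁻¹ C else 0)
      - 2 * jacRow H A + Fintype.card F * (#H - 2) := by
  have hterm : ∀ B ∈ H.erase 1, (if A * B ≠ 1 then jac A B * ∑ C ∈ H, jac A⁻¹ C else 0) =
      (if A * B ≠ 1 then (Fintype.card F : ℂ) else 0)
      - (1 + A (-1)) * (if A * B ≠ 1 then jac A B else 0)
      + ∑ C ∈ H.erase 1, if A * B ≠ 1 ∧ C * B ≠ 1 ∧ C ≠ A then jac A B * jac A⁻¹ C else 0 := by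
    intro B hB
    by_cases hAB : A * B = 1
    · simp [hAB]
    simp only [ne_eq, hAB, not_false_eq_true, if_true, true_and]
    rw [sum_jac_inv_eq_of_mul_ne_one one_mem inv_mem hA hB hAB, mul_add, mul_sum]
    simp only [mul_ite, mul_zero]
    rw [← jac_mul_jac_inv (ne_of_mem_erase hA) (ne_of_mem_erase hB) hAB]
    ring
  have hcard : (#{B ∈ H.erase 1 | A * B ≠ 1} : ℂ) = #H - 2 := by
    rw [← card_filter_mul_ne_one_add_two one_mem inv_mem hA]
    push_cast
    ring
  rw [sum_congr rfl hterm, sum_add_distrib, sum_sub_distrib, ← mul_sum,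
    ← sum_filter, sum_const, nsmul_eq_mul, hcard, ← jacRow,
    add_mul, one_mul, apply_neg_one_mul_jacRow mul_mem inv_mem (mem_of_mem_erase hA)]
  ring

lemma sum_sum_jac_mul_jac_inv (one_mem : 1 ∈ H) (mul_mem : ∀ A ∈ H, ∀ B ∈ H, A * B ∈ H)
    (inv_mem : ∀ A ∈ H, A⁻¹ ∈ H) {A : MulChar F ℂ} (hA : A ∈ H.erase 1) :
    ∑ B ∈ H, ∑ C ∈ H, jac A B * jac A⁻¹ C =
      (∑ B ∈ H.erase 1, ∑ C ∈ H.erase 1,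
        if A * B ≠ 1 ∧ C * B ≠ 1 ∧ C ≠ A then jac A B * jac A⁻¹ C else 0)
      - 2 * jacRow H A - 2 * jacRow H A⁻¹ + Fintype.card F * (#H - 2) + 2 + 2 * A (-1) := by
  have hA1 := ne_of_mem_erase hA
  have hrefl : A (-1) * jacRow H A⁻¹ = jacRow H A⁻¹ := by
    rw [← A.inv_apply_neg_one]
    exact apply_neg_one_mul_jacRow mul_mem inv_mem (inv_mem A (mem_of_mem_erase hA))
  simp_rw [← mul_sum]
  rw [← add_sum_erase H _ one_mem, sum_erase_one_eq_add_sum_ite inv_mem hA,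
    sum_ite_jac_mul_sum_jac_inv one_mem mul_mem inv_mem hA, jac_one_right hA1, jac_inv_right hA1,
    sum_jac_inv one_mem inv_mem hA]
  linear_combination A.apply_neg_one_mul_self - hrefl

theorem sum_sum_sum_jac_mul_jac_inv (one_mem : 1 ∈ H) (mul_mem : ∀ A ∈ H, ∀ B ∈ H, A * B ∈ H)
    (inv_mem : ∀ A ∈ H, A⁻¹ ∈ H) :
    ∑ A ∈ H, ∑ B ∈ H, ∑ C ∈ H, jac A B * jac A⁻¹ C =
      jacS H - 4 * jacR H + (Fintype.card F - 1 - #H) ^ 2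
        + Fintype.card F * (#H - 1) * (#H - 2) + 2 * (#H - 2) + 2 * ∑ A ∈ H, A (-1) := by
  rw [← add_sum_erase H _ one_mem, inv_one, ← sum_mul_sum, sum_jac_one_left one_mem,
    sum_congr rfl fun A hA => sum_sum_jac_mul_jac_inv one_mem mul_mem inv_mem hA,
    ← add_sum_erase H (· (-1)) one_mem]
  simp only [sum_add_distrib, sum_sub_distrib, ← mul_sum, sum_const, nsmul_eq_mul,
    sum_erase_one_inv inv_mem (jacRow H), card_erase_of_mem one_mem,
    Nat.cast_sub (card_pos.mpr ⟨1, one_mem⟩), Nat.cast_one]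
  rw [jacS, jacR, MulChar.one_apply isUnit_one.neg]
  ring

end CharacterGroup

section Powers

open Finset

variable {G : Type*}

lemma natCast_add_eq_zero_iff_pow_mul_pow_eq_one [Monoid G] (x : G) (s t : ℕ) :
    (s : ZMod (orderOf x)) + t = 0 ↔ x ^ s * x ^ t = 1 := by
  rw [← pow_add, pow_eq_one_iff_modEq, ← ZMod.natCast_eq_natCast_iff, Nat.cast_add, Nat.cast_zero]

lemma natCast_sub_eq_zero_iff_pow_eq_pow [LeftCancelMonoid G] (x : G) (s t : ℕ) :
    (s : ZMod (orderOf x)) - t = 0 ↔ x ^ s = x ^ t := by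
  rw [sub_eq_zero, ZMod.natCast_eq_natCast_iff, pow_eq_pow_iff_modEq]

variable [DecidableEq G]

lemma mem_image_range_orderOf_iff [Group G] [Finite G] {x y : G} :
    y ∈ (range (orderOf x)).image (x ^ ·) ↔ y ∈ Subgroup.zpowers x := by
  rw [← mem_coe, ← (isOfFinOrder_of_finite x).powers_eq_image_range_orderOf, SetLike.mem_coe,
    mem_powers_iff_mem_zpowers]

lemma card_image_range_orderOf [Monoid G] (x : G) :
    #((range (orderOf x)).image (x ^ ·)) = orderOf x := by
  rw [card_image_of_injOn (by rw [coe_range]; exact pow_injOn_Iio_orderOf), card_range]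

lemma sum_range_orderOf_pow {M : Type*} [AddCommMonoid M] [Monoid G] (x : G) (f : G → M) :
    ∑ s ∈ range (orderOf x), f (x ^ s) = ∑ A ∈ (range (orderOf x)).image (x ^ ·), f A :=
  (sum_image fun _ ha _ hb h =>
    pow_injOn_Iio_orderOf (by simpa using ha) (by simpa using hb) h).symm

lemma sum_Icc_orderOf_pow {M : Type*} [AddCancelCommMonoid M] [Monoid G] (x : G)
    (hx : 0 < orderOf x) (f : G → M) :
    ∑ s ∈ Icc 1 (orderOf x - 1), f (x ^ s) =
      ∑ A ∈ ((range (orderOf x)).image (x ^ ·)).erase 1, f A := by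
  have h := sum_range_orderOf_pow x f
  have hIcc : Icc 1 (orderOf x - 1) = Ico 1 (orderOf x) := by ext; simp; omega
  rw [sum_range_eq_add_Ico _ hx,
    ← add_sum_erase _ _ (mem_image.mpr ⟨0, mem_range.mpr hx, pow_zero x⟩), pow_zero, ← hIcc] at h
  exact add_left_cancel h

variable {F : Type} [Field F] [Fintype F] [DecidableEq (MulChar F ℂ)]

lemma Rk_orderOf_eq_jacR (χ : MulChar F ℂ) :
    Rk (orderOf χ) χ = jacR ((range (orderOf χ)).image (χ ^ ·)) := by
  simp_rw [jacR, jacRow, ← sum_Icc_orderOf_pow χ χ.orderOf_pos, Rk, ne_eq,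
    natCast_add_eq_zero_iff_pow_mul_pow_eq_one]

lemma Sk_orderOf_eq_jacS (χ : MulChar F ℂ) :
    Sk (orderOf χ) χ = jacS ((range (orderOf χ)).image (χ ^ ·)) := by
  simp_rw [jacS, ← sum_Icc_orderOf_pow χ χ.orderOf_pos, Sk, ne_eq, inv_pow,
    natCast_add_eq_zero_iff_pow_mul_pow_eq_one, natCast_sub_eq_zero_iff_pow_eq_pow]

end Powers

theorem stmt_14_general {F : Type} [Field F] [Fintype F] (q k : ℕ)
    (hkeven : Even k) (hq : Fintype.card F = q)
    (hmod : q % (2 * k) = k + 1)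
    (χ : MulChar F ℂ) (hχ : orderOf χ = k) :
    ∑ s ∈ Finset.range k, ∑ t ∈ Finset.range k, ∑ v ∈ Finset.range k,
        jac (χ ^ s) (χ ^ t) * jac (χ⁻¹ ^ s) (χ ^ v) =
      Sk k χ - 4 * Rk k χ + (q : ℂ) ^ 2 + (q : ℂ) * ((k : ℂ) ^ 2 - 5 * (k : ℂ))
        + (k : ℂ) ^ 2 + 4 * (k : ℂ) - 3 := by
  classical
  subst hχ hq
  set H := (Finset.range (orderOf χ)).image (χ ^ ·) with hH
  have hmem : ∀ {A}, A ∈ H ↔ A ∈ Subgroup.zpowers χ := mem_image_range_orderOf_iff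
  have mul_mem : ∀ A ∈ H, ∀ B ∈ H, A * B ∈ H := fun A hA B hB =>
    hmem.mpr (Subgroup.mul_mem _ (hmem.mp hA) (hmem.mp hB))
  have inv_mem : ∀ A ∈ H, A⁻¹ ∈ H := fun A hA => hmem.mpr (Subgroup.inv_mem _ (hmem.mp hA))
  have hneg : χ (-1) = -1 :=
    χ.apply_neg_one_eq_neg_one hkeven (Nat.odd_sub_one_div_of_mod_two_mul χ.orderOf_pos hmod)
  have hsum := sum_sum_sum_jac_mul_jac_inv (hmem.mpr (Subgroup.one_mem _)) mul_mem inv_mem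
  rw [sum_apply_neg_one_eq_zero mul_mem inv_mem (hmem.mpr (Subgroup.mem_zpowers χ)) hneg,
    card_image_range_orderOf, ← Sk_orderOf_eq_jacS, ← Rk_orderOf_eq_jacR] at hsum
  simp_rw [hH, ← sum_range_orderOf_pow] at hsum
  simp_rw [inv_pow]
  linear_combination hsum

theorem stmt_14 {F : Type} [Field F] [Fintype F] (q k : ℕ)
    (hk : 2 ≤ k) (hkeven : Even k) (hq : Fintype.card F = q)
    (hmod : q % (2 * k) = k + 1)
    (χ : MulChar F ℂ) (hχ : orderOf χ = k) :
    ∑ s ∈ Finset.range k, ∑ t ∈ Finset.range k, ∑ v ∈ Finset.range k,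
        jac (χ ^ s) (χ ^ t) * jac (χ⁻¹ ^ s) (χ ^ v) =
      Sk k χ - 4 * Rk k χ + (q : ℂ) ^ 2 + (q : ℂ) * ((k : ℂ) ^ 2 - 5 * (k : ℂ))
        + (k : ℂ) ^ 2 + 4 * (k : ℂ) - 3 :=
  stmt_14_general q k hkeven hq hmod χ hχ
end

section
/- Let k ≥ 2 be an even integer and q a prime power with q ≡ k+1 (mod 2k). Let H_k(q) be the induced subdigraph of G_k(q) on the set S_k of nonzero k-th powers of F_q. Then for every positive integer m, K_{m+1}(G_k(q)) = q · K_m(H_k(q)). -/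
/-- If the edge relation is asymmetric, `transK` counts ordered transitive tuples. -/
private lemma transK_eq_tuples {V : Type} [DecidableEq V] (edge : V → V → Prop)
    (hasym : ∀ a b : V, edge a b → ¬ edge b a) (n : ℕ) :
    transK edge n = {f : Fin n → V | Function.Injective f ∧
      ∀ i j : Fin n, i < j → edge (f i) (f j)}.ncard := by
  unfold transK
  have hset : {s : Finset V | ∃ f : Fin n → V, Function.Injective f ∧
      s = Finset.image f Finset.univ ∧ ∀ i j : Fin n, i < j → edge (f i) (f j)}
      = (fun f : Fin n → V => Finset.image f Finset.univ) ''
        {f | Function.Injective f ∧ ∀ i j : Fin n, i < j → edge (f i) (f j)} := by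
    ext s
    simp only [Set.mem_setOf_eq, Set.mem_image]
    constructor
    · rintro ⟨f, h1, h2, h3⟩; exact ⟨f, ⟨h1, h3⟩, h2.symm⟩
    · rintro ⟨f, ⟨h1, h3⟩, h2⟩; exact ⟨f, h1, h2.symm, h3⟩
  rw [hset, Set.ncard_image_of_injOn]
  rintro f ⟨hf, hfe⟩ g ⟨hg, hge⟩ h
  -- from equal images, extract σ with g ∘ σ = f
  have hmem : ∀ i : Fin n, ∃ j : Fin n, g j = f i := by
    intro i
    have h' : Finset.image f Finset.univ = Finset.image g Finset.univ := h
    have : f i ∈ Finset.image g Finset.univ := by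
      rw [← h']; exact Finset.mem_image_of_mem f (Finset.mem_univ i)
    simpa using this
  choose σ hσ using hmem
  have hσinj : Function.Injective σ := by
    intro i j hij
    apply hf
    rw [← hσ i, ← hσ j, hij]
  have hσmono : StrictMono σ := by
    intro i j hij
    rcases lt_trichotomy (σ i) (σ j) with h' | h' | h'
    · exact h'
    · exact absurd (hσinj h') (ne_of_lt hij)
    · exact absurd (hfe i j hij) (by rw [← hσ i, ← hσ j]; exact hasym _ _ (hge _ _ h'))
  have hσid : σ = id := by
    have hsurj : Function.Surjective σ := Finite.surjective_of_injective hσinj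
    have hrange : Set.range σ = Set.range (id : Fin n → Fin n) := by
      rw [Set.range_id, Set.range_eq_univ.mpr hsurj]
    haveI : WellFoundedLT (Fin n) := inferInstance
    exact (StrictMono.range_inj hσmono strictMono_id).mp hrange
  funext i
  rw [← hσ i, hσid, id]

theorem stmt_17 {F : Type} [Field F] [Fintype F] [DecidableEq F] (q k : ℕ)
    (hk : 2 ≤ k) (hkeven : Even k) (hq : Fintype.card F = q)
    (hmod : q % (2 * k) = k + 1) (m : ℕ) (hm : 0 < m) :
    transK (fun a b : F => ∃ c : F, c ≠ 0 ∧ b - a = c ^ k) (m + 1) =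
      q * transK
        (fun a b : {x : F // ∃ c : F, c ≠ 0 ∧ x = c ^ k} =>
          ∃ c : F, c ≠ 0 ∧ (b : F) - (a : F) = c ^ k) m := by
  obtain ⟨t, ht⟩ := hkeven
  -- arithmetic consequences of the congruence
  have hkpos : 0 < k := by omega
  have heq : q = 2 * k * (q / (2 * k)) + (k + 1) := by
    conv_lhs => rw [← Nat.div_add_mod q (2 * k)]
    rw [hmod]
  set s := q / (2 * k) with hs
  have hq1 : q = k * (2 * s + 1) + 1 := by rw [heq]; ring
  have hqodd : q % 2 = 1 := by
    have h2 : q = 2 * ((t + t) * s + t) + 1 := by rw [heq, ht]; ring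
    omega
  -- the field has odd characteristic, so -1 ≠ 1
  have hne1 : (-1 : F) ≠ 1 := by
    intro h
    have h2 : ((2 : ℕ) : F) = 0 := by
      push_cast
      linear_combination -h
    have hdvd : ringChar F ∣ 2 := ringChar.dvd h2
    have hchar2 : ringChar F = 2 := by
      rcases (Nat.prime_two.eq_one_or_self_of_dvd _ hdvd) with h' | h'
      · exact absurd h' (CharP.ringChar_ne_one)
      · exact h'
    haveI : CharP F 2 := hchar2 ▸ ringChar.charP F
    obtain ⟨n, hcard⟩ := FiniteField.card F 2
    rw [hq] at hcard
    have h2d : 2 ∣ q := by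
      rw [hcard.2]
      exact dvd_pow_self 2 n.ne_zero
    omega
  -- -1 is not a k-th power of a nonzero element
  have hnegone : ∀ e : F, e ≠ 0 → e ^ k ≠ -1 := by
    intro e he hek
    have h1 : e ^ (q - 1) = 1 := by
      rw [← hq]; exact FiniteField.pow_card_sub_one_eq_one e he
    have h2 : q - 1 = k * (2 * s + 1) := by
      rw [hq1, Nat.add_sub_cancel]
    rw [h2, pow_mul, hek, Odd.neg_one_pow ⟨s, by ring⟩] at h1
    exact hne1 h1
  -- asymmetry of the Paley digraph edge relation
  have hGasym : ∀ a b : F, (∃ c : F, c ≠ 0 ∧ b - a = c ^ k) →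
      ¬ (∃ c : F, c ≠ 0 ∧ a - b = c ^ k) := by
    rintro a b ⟨c, hc0, hc⟩ ⟨d, hd0, hd⟩
    have hba : b - a ≠ 0 := by
      intro h0
      rw [h0] at hc
      exact hc0 ((pow_eq_zero_iff hkpos.ne').mp hc.symm)
    apply hnegone (c * d⁻¹) (mul_ne_zero hc0 (inv_ne_zero hd0))
    rw [mul_pow, inv_pow, ← hc, ← hd]
    have hab : a - b = -(b - a) := by ring
    rw [hab, inv_neg, mul_neg, mul_inv_cancel₀ hba]
  have hHasym : ∀ a b : {x : F // ∃ c : F, c ≠ 0 ∧ x = c ^ k},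
      (∃ c : F, c ≠ 0 ∧ (b : F) - (a : F) = c ^ k) →
      ¬ (∃ c : F, c ≠ 0 ∧ (a : F) - (b : F) = c ^ k) :=
    fun a b h => hGasym (a : F) (b : F) h
  -- rewrite both sides as counts of ordered tuples
  rw [transK_eq_tuples _ hGasym, transK_eq_tuples _ hHasym]
  -- the two sets of tuples
  set A := {f : Fin (m + 1) → F | Function.Injective f ∧
      ∀ i j : Fin (m + 1), i < j → ∃ c : F, c ≠ 0 ∧ f j - f i = c ^ k} with hA
  set B := {g : Fin m → {x : F // ∃ c : F, c ≠ 0 ∧ x = c ^ k} | Function.Injective g ∧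
      ∀ i j : Fin m, i < j → ∃ c : F, c ≠ 0 ∧ (g j : F) - (g i : F) = c ^ k} with hB
  -- build the equivalence A ≃ F × B
  have hBne : ∀ (g : Fin m → {x : F // ∃ c : F, c ≠ 0 ∧ x = c ^ k}) (i : Fin m),
      (g i : F) ≠ 0 := by
    intro g i h0
    obtain ⟨c, hc0, hc⟩ := (g i).2
    rw [h0] at hc
    exact hc0 ((pow_eq_zero_iff hkpos.ne').mp hc.symm)
  let e : A ≃ F × B :=
    { toFun := fun f =>
        (f.1 0, ⟨fun i => ⟨f.1 i.succ - f.1 0, f.2.2 0 i.succ (Fin.succ_pos i)⟩, by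
          constructor
          · intro i j hij
            apply Fin.succ_injective
            apply f.2.1
            have := congrArg Subtype.val hij
            simpa [sub_left_inj] using this
          · intro i j hij
            simp only
            rw [sub_sub_sub_cancel_right]
            exact f.2.2 i.succ j.succ (Fin.succ_lt_succ_iff.mpr hij)⟩)
      invFun := fun p =>
        ⟨Fin.cases p.1 (fun i => p.1 + (p.2.1 i : F)), by
          constructor
          · intro x y
            induction x using Fin.cases with
            | zero =>
              induction y using Fin.cases with
              | zero => intro _; rfl
              | succ j =>
                simp only [Fin.cases_zero, Fin.cases_succ]
                intro h
                exact absurd (left_eq_add.mp h) (hBne p.2.1 j)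
            | succ i =>
              induction y using Fin.cases with
              | zero =>
                simp only [Fin.cases_zero, Fin.cases_succ]
                intro h
                exact absurd (left_eq_add.mp h.symm) (hBne p.2.1 i)
              | succ j =>
                simp only [Fin.cases_succ]
                intro h
                have : p.2.1 i = p.2.1 j := Subtype.ext (add_left_cancel h)
                rw [p.2.2.1 this]
          · intro i j hij
            induction j using Fin.cases with
            | zero => exact absurd hij (Fin.not_lt_zero i)
            | succ j =>
              induction i using Fin.cases with
              | zero =>
                simp only [Fin.cases_zero, Fin.cases_succ, add_sub_cancel_left]
                exact (p.2.1 j).2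
              | succ i =>
                simp only [Fin.cases_succ, add_sub_add_left_eq_sub]
                exact p.2.2.2 i j (Fin.succ_lt_succ_iff.mp hij)⟩
      left_inv := by
        rintro ⟨f, hf⟩
        apply Subtype.ext
        funext j
        induction j using Fin.cases with
        | zero => simp
        | succ j => simp
      right_inv := by
        rintro ⟨t, g, hg⟩
        refine Prod.ext (by simp) ?_
        apply Subtype.ext
        funext i
        apply Subtype.ext
        simp }
  calc A.ncard = Nat.card A := (Nat.card_coe_set_eq A).symm
    _ = Nat.card (F × B) := Nat.card_congr e
    _ = Nat.card F * Nat.card B := Nat.card_prod F B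
    _ = q * B.ncard := by rw [Nat.card_eq_fintype_card, hq, Nat.card_coe_set_eq]
end

section
/- Let k ≥ 2 be an even integer and q a prime power with q ≡ k+1 (mod 2k). Let H_k(q) be the induced subdigraph of G_k(q) on the set S_k of nonzero k-th powers of F_q, and let H¹_k(q) be the induced subdigraph of H_k(q) on the out-neighbors of 1 in H_k(q), i.e., on the vertex set { a ∈ F_q : a ∈ S_k and a − 1 ∈ S_k }. Then for every positive integer m, k · K_{m+1}(H_k(q)) = (q − 1) · K_m(H¹_k(q)). -/
/-! A transitive subtournament of order `m + 1` of `H_k(q)` has a unique source `v`: since `-1` is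
not a `k`-th power, the digraph is asymmetric. Removing `v` leaves a transitive subtournament of
order `m` of the out-neighbourhood of `v`, and division by `v` is an isomorphism of that
out-neighbourhood onto `H¹_k(q)`. Hence `K_{m+1}(H_k(q)) = |S_k| · K_m(H¹_k(q))`, and
`k · |S_k| = q - 1` because `F_qˣ` is cyclic of order `q - 1`, a multiple of `k`. -/

open Finset Function

section Digraph

variable {V W : Type} [DecidableEq V] [DecidableEq W]

def transitiveSubsets (edge : V → V → Prop) (m : ℕ) : Set (Finset V) :=
  {s | ∃ f : Fin m → V, Injective f ∧ s = image f univ ∧ ∀ i j : Fin m, i < j → edge (f i) (f j)}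

theorem transK_eq_ncard (edge : V → V → Prop) (m : ℕ) :
    transK edge m = (transitiveSubsets edge m).ncard :=
  rfl

theorem image_fin_cons_univ {m : ℕ} (a : V) (f : Fin m → V) :
    image (Fin.cons a f : Fin (m + 1) → V) univ = insert a (image f univ) := by
  ext x
  simp [Fin.exists_fin_succ, eq_comm]

theorem map_mem_transitiveSubsets {edge : V → V → Prop} {edge' : W → W → Prop} {m : ℕ}
    (e : V ↪ W) (he : ∀ a b, edge a b → edge' (e a) (e b)) {s : Finset V}
    (hs : s ∈ transitiveSubsets edge m) : s.map e ∈ transitiveSubsets edge' m := by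
  obtain ⟨f, hf, rfl, hedge⟩ := hs
  exact ⟨e ∘ f, e.injective.comp hf, by rw [map_eq_image, image_image],
    fun i j hij => he _ _ (hedge i j hij)⟩

theorem transK_congr {edge : V → V → Prop} {edge' : W → W → Prop} (e : V ≃ W)
    (he : ∀ a b, edge' (e a) (e b) ↔ edge a b) (m : ℕ) :
    transK edge' m = transK edge m := by
  have himage : (fun s => s.map e.toEmbedding) '' transitiveSubsets edge m =
      transitiveSubsets edge' m := by
    refine Set.Subset.antisymm ?_ fun s hs => ⟨s.map e.symm.toEmbedding, ?_, ?_⟩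
    · rintro _ ⟨s, hs, rfl⟩
      exact map_mem_transitiveSubsets _ (fun a b => (he a b).2) hs
    · exact map_mem_transitiveSubsets _ (fun a b h => by simpa [← he] using h) hs
    · simp [map_map]
  rw [transK_eq_ncard, transK_eq_ncard, ← himage,
    Set.ncard_image_of_injective _ (map_injective _)]

variable {edge : V → V → Prop} {m : ℕ}

theorem insert_map_mem_transitiveSubsets (v : V) {t : Finset {w // edge v w}}
    (ht : t ∈ transitiveSubsets (fun a b : {w // edge v w} => edge a b) m)
    (hirrefl : ¬ edge v v) :
    insert v (t.map (Embedding.subtype _)) ∈ transitiveSubsets edge (m + 1) := by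
  obtain ⟨f, hf, rfl, hedge⟩ := ht
  refine ⟨Fin.cons v (fun i => f i), ?_, ?_, ?_⟩
  · refine Fin.cons_injective_iff.2 ⟨?_, Subtype.val_injective.comp hf⟩
    rintro ⟨i, hi⟩
    have h := (f i).2
    rw [show ((f i) : V) = v from hi] at h
    exact hirrefl h
  · rw [image_fin_cons_univ, map_eq_image, image_image]
    rfl
  · intro i j hij
    induction j using Fin.cases with
    | zero => exact absurd hij (Fin.not_lt_zero _)
    | succ j =>
      induction i using Fin.cases with
      | zero => exact (f j).2
      | succ i => exact hedge i j (Fin.succ_lt_succ_iff.1 hij)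

theorem exists_insert_map_eq_of_mem_transitiveSubsets {s : Finset V}
    (hs : s ∈ transitiveSubsets edge (m + 1)) :
    ∃ v, ∃ t ∈ transitiveSubsets (fun a b : {w // edge v w} => edge a b) m,
      insert v (t.map (Embedding.subtype _)) = s := by
  obtain ⟨f, hf, rfl, hedge⟩ := hs
  let g : Fin m → {w // edge (f 0) w} := fun i => ⟨f i.succ, hedge 0 i.succ i.succ_pos⟩
  refine ⟨f 0, image g univ, ⟨g, ?_, rfl, ?_⟩, ?_⟩
  · exact fun i j hij => Fin.succ_injective _ (hf (congrArg Subtype.val hij))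
  · exact fun i j hij => hedge _ _ (Fin.succ_lt_succ_iff.2 hij)
  · conv_rhs => rw [← Fin.cons_self_tail f, image_fin_cons_univ]
    rw [map_eq_image, image_image]
    rfl

theorem transK_succ [Fintype V] (hasymm : ∀ a b, edge a b → ¬ edge b a) :
    transK edge (m + 1) = ∑ v, transK (fun a b : {w // edge v w} => edge a b) m := by
  have hirrefl : ∀ v, ¬ edge v v := fun v h => hasymm v v h h
  have hout : ∀ {v x : V} {t : Finset {w // edge v w}},
      x ∈ t.map (Embedding.subtype _) → edge v x := by
    intro v x t hx
    obtain ⟨y, -, rfl⟩ := mem_map.1 hx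
    exact y.2
  simp only [transK_eq_ncard, ← Nat.card_coe_set_eq]
  rw [← Nat.card_sigma]
  refine (Nat.card_eq_of_bijective
    (fun p => ⟨_, insert_map_mem_transitiveSubsets p.1 p.2.2 (hirrefl p.1)⟩) ⟨?_, ?_⟩).symm
  · rintro ⟨v, t, ht⟩ ⟨w, u, hu⟩ h
    have h' := congrArg Subtype.val h
    dsimp only at h'
    obtain rfl : v = w := by
      by_contra hne
      have hw := (mem_insert.1 (h' ▸ mem_insert_self w _)).resolve_left (Ne.symm hne)
      have hv := (mem_insert.1 (h'.symm ▸ mem_insert_self v _)).resolve_left hne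
      exact hasymm v w (hout hw) (hout hv)
    have hnot : ∀ r : Finset {x // edge v x}, v ∉ r.map (Embedding.subtype _) := fun r hv =>
      hirrefl v (hout hv)
    obtain rfl : t = u := map_injective _ <| by
      rw [← erase_insert (hnot t), h', erase_insert (hnot u)]
    rfl
  · rintro ⟨s, hs⟩
    obtain ⟨v, t, ht, rfl⟩ := exists_insert_map_eq_of_mem_transitiveSubsets hs
    exact ⟨⟨v, t, ht⟩, rfl⟩

end Digraph

section MultiplicativeClass

variable {F : Type} [Field F] [DecidableEq F] {P : F → Prop}

def outNbhdEquiv (hP0 : ∀ x, P x → x ≠ 0) (hmul : ∀ x y, P x → P y → P (x * y))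
    (hdiv : ∀ x y, P x → P y → P (x / y)) (v : {x // P x}) :
    {w : {x // P x} // P (w - v)} ≃ {x // P x ∧ P (x - 1)} where
  toFun w := ⟨w / v, hdiv _ _ w.1.2 v.2, by
    rw [div_sub_one (hP0 _ v.2)]
    exact hdiv _ _ w.2 v.2⟩
  invFun x := ⟨⟨v * x, hmul _ _ v.2 x.2.1⟩, by
    rw [show (v : F) * x - v = v * (x - 1) by ring]
    exact hmul _ _ v.2 x.2.2⟩
  left_inv w := Subtype.ext <| Subtype.ext <| mul_div_cancel₀ _ (hP0 _ v.2)
  right_inv x := Subtype.ext <| mul_div_cancel_left₀ _ (hP0 _ v.2)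

theorem transK_succ_eq_card_mul [Fintype F] (hP0 : ∀ x, P x → x ≠ 0)
    (hmul : ∀ x y, P x → P y → P (x * y)) (hdiv : ∀ x y, P x → P y → P (x / y))
    (hneg : ¬ P (-1)) (m : ℕ) :
    transK (fun a b : {x // P x} => P (b - a)) (m + 1) =
      Nat.card {x // P x} * transK (fun a b : {x // P x ∧ P (x - 1)} => P (b - a)) m := by
  classical
  have hasymm : ∀ a b : {x // P x}, P (b - a) → ¬ P (a - b) := fun a b hab hba => by
    have h := hdiv _ _ hba hab
    rw [← neg_sub, neg_div, div_self (hP0 _ hab)] at h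
    exact hneg h
  have hdiv_iff : ∀ {v x : F}, P v → (P (x / v) ↔ P x) := fun hv =>
    ⟨fun h => by simpa [div_mul_cancel₀ _ (hP0 _ hv)] using hmul _ _ h hv,
      fun h => hdiv _ _ h hv⟩
  rw [transK_succ hasymm, Nat.card_eq_fintype_card, ← smul_eq_mul, ← card_univ, ← sum_const]
  refine sum_congr rfl fun v _ =>
    (transK_congr (outNbhdEquiv hP0 hmul hdiv v) (fun a b => ?_) m).symm
  change P (b / v - a / v) ↔ P (b - a)
  rw [← sub_div]
  exact hdiv_iff v.2

end MultiplicativeClass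

section KthPowers

variable {F : Type} [Field F] [Fintype F] {k : ℕ}

theorem transK_kthPowers_succ [DecidableEq F] (hneg : ¬ ∃ c : F, c ≠ 0 ∧ -1 = c ^ k) (m : ℕ) :
    transK (fun a b : {x : F // ∃ c : F, c ≠ 0 ∧ x = c ^ k} =>
        ∃ c : F, c ≠ 0 ∧ (b : F) - (a : F) = c ^ k) (m + 1) =
      Nat.card {x : F // ∃ c : F, c ≠ 0 ∧ x = c ^ k} *
        transK (fun a b : {x : F // (∃ c : F, c ≠ 0 ∧ x = c ^ k) ∧
          ∃ c : F, c ≠ 0 ∧ x - 1 = c ^ k} => ∃ c : F, c ≠ 0 ∧ (b : F) - (a : F) = c ^ k) m :=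
  transK_succ_eq_card_mul (fun _ ⟨_, hc, hx⟩ => hx ▸ pow_ne_zero k hc)
    (fun _ _ ⟨c, hc, hx⟩ ⟨d, hd, hy⟩ => ⟨c * d, mul_ne_zero hc hd, by rw [hx, hy, mul_pow]⟩)
    (fun _ _ ⟨c, hc, hx⟩ ⟨d, hd, hy⟩ => ⟨c / d, div_ne_zero hc hd, by rw [hx, hy, div_pow]⟩)
    hneg m

theorem mul_card_kthPowers (hk : k ∣ Fintype.card F - 1) :
    k * Nat.card {x : F // ∃ c : F, c ≠ 0 ∧ x = c ^ k} = Fintype.card F - 1 := by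
  have himage : {x : F | ∃ c : F, c ≠ 0 ∧ x = c ^ k} =
      Units.val '' ((powMonoidHom k : Fˣ →* Fˣ).range : Set Fˣ) := by
    ext x
    simp only [Set.mem_ofPred_eq, Set.mem_image, SetLike.mem_coe, MonoidHom.mem_range,
      powMonoidHom_apply, exists_exists_eq_and, Units.val_pow_eq_pow_val]
    constructor
    · rintro ⟨c, hc, rfl⟩
      exact ⟨Units.mk0 c hc, rfl⟩
    · rintro ⟨u, rfl⟩
      exact ⟨u, u.ne_zero, rfl⟩
  have hunits : Nat.card Fˣ = Fintype.card F - 1 := by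
    classical
    rw [Nat.card_eq_fintype_card, Fintype.card_units]
  calc k * Nat.card {x : F // ∃ c : F, c ≠ 0 ∧ x = c ^ k}
      = k * Nat.card (powMonoidHom k : Fˣ →* Fˣ).range := by
        rw [← Set.coe_ofPred, Nat.card_coe_set_eq, himage,
          Set.ncard_image_of_injective _ Units.val_injective, ← Nat.card_coe_set_eq]
        rfl
    _ = Fintype.card F - 1 := by
      rw [IsCyclic.card_powMonoidHom_range, hunits, Nat.gcd_eq_right hk, Nat.mul_div_cancel' hk]

theorem not_exists_pow_eq_neg_one {n : ℕ} (hcard : Fintype.card F - 1 = k * n) (hn : Odd n)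
    (hF : ringChar F ≠ 2) : ¬ ∃ c : F, c ≠ 0 ∧ -1 = c ^ k := by
  rintro ⟨c, hc, h⟩
  have hpow : (-1 : F) ^ n = 1 := by
    rw [h, ← pow_mul, ← hcard, FiniteField.pow_card_sub_one_eq_one c hc]
  rw [hn.neg_one_pow] at hpow
  exact hF (neg_one_eq_one_iff.1 hpow)

end KthPowers

theorem stmt_18_general {F : Type} [Field F] [Fintype F] [DecidableEq F] (q k : ℕ)
    (hkeven : Even k) (hq : Fintype.card F = q)
    (hmod : q % (2 * k) = k + 1) (m : ℕ) :
    k * transK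
        (fun a b : {x : F // ∃ c : F, c ≠ 0 ∧ x = c ^ k} =>
          ∃ c : F, c ≠ 0 ∧ (b : F) - (a : F) = c ^ k) (m + 1) =
      (q - 1) * transK
        (fun a b : {x : F // (∃ c : F, c ≠ 0 ∧ x = c ^ k) ∧ ∃ c : F, c ≠ 0 ∧ x - 1 = c ^ k} =>
          ∃ c : F, c ≠ 0 ∧ (b : F) - (a : F) = c ^ k) m := by
  obtain ⟨t, ht⟩ : ∃ t, q = k * (2 * t + 1) + 1 :=
    ⟨q / (2 * k), by linarith [hmod ▸ Nat.div_add_mod q (2 * k)]⟩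
  have hcard : Fintype.card F - 1 = k * (2 * t + 1) := by
    rw [hq, ht, Nat.add_sub_cancel]
  have hchar : ringChar F ≠ 2 := by
    rw [Ne, FiniteField.even_card_iff_char_two, hq, ht]
    obtain ⟨r, rfl⟩ := hkeven
    rw [← two_mul, mul_assoc, Nat.mul_add_mod]
    decide
  have hneg := not_exists_pow_eq_neg_one hcard (odd_two_mul_add_one t) hchar
  rw [transK_kthPowers_succ hneg, ← mul_assoc, mul_card_kthPowers ⟨_, hcard⟩, hq]

theorem stmt_18 {F : Type} [Field F] [Fintype F] [DecidableEq F] (q k : ℕ)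
    (hk : 2 ≤ k) (hkeven : Even k) (hq : Fintype.card F = q)
    (hmod : q % (2 * k) = k + 1) (m : ℕ) (hm : 0 < m) :
    k * transK
        (fun a b : {x : F // ∃ c : F, c ≠ 0 ∧ x = c ^ k} =>
          ∃ c : F, c ≠ 0 ∧ (b : F) - (a : F) = c ^ k) (m + 1) =
      (q - 1) * transK
        (fun a b : {x : F // (∃ c : F, c ≠ 0 ∧ x = c ^ k) ∧ ∃ c : F, c ≠ 0 ∧ x - 1 = c ^ k} =>
          ∃ c : F, c ≠ 0 ∧ (b : F) - (a : F) = c ^ k) m :=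
  stmt_18_general q k hkeven hq hmod m
end
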